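/- Let G be a Lie group and ω : W → X a subduction of diffeological spaces. The pullback functor ω* from the groupoid of diffeological principal G-bundles over X to the descent category Des(ω) is an equivalence of groupoids. Consequently, the assignment X ↦ Bun_G(X) of diffeological principal G-bundles defines a sheaf of groupoids over the site of diffeological spaces with subductions as covers. -/

import Mathlib

open scoped Manifold Topology ContDiff

noncomputable section

/-- The Euclidean domains of plots. -/
abbrev Eucl (n : ℕ) : Type := Fin n → ℝ

/-- A diffeology on a set `X`, presented in terms of plots defined on all of `ℝⁿ`
(equivalently, by locality, plots on open subsets). -/
structure Diffeology (X : Type*) where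
  plots : ∀ n : ℕ, Set (Eucl n → X)
  const_mem : ∀ (n : ℕ) (x : X), (fun _ => x) ∈ plots n
  reparam_mem : ∀ {n m : ℕ} {p : Eucl n → X} {f : Eucl m → Eucl n},
    p ∈ plots n → ContDiff ℝ ∞ f → (p ∘ f) ∈ plots m
  locality : ∀ {n : ℕ} {p : Eucl n → X},
    (∀ x : Eucl n, ∃ U : Set (Eucl n), IsOpen U ∧ x ∈ U ∧
      ∃ q ∈ plots n, ∀ y ∈ U, p y = q y) → p ∈ plots n

variable {X Y Z W : Type*}

/-- A map between diffeological spaces is smooth if it maps plots to plots. -/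
def DSmooth (DX : Diffeology X) (DY : Diffeology Y) (f : X → Y) : Prop :=
  ∀ (n : ℕ), ∀ p ∈ DX.plots n, (f ∘ p) ∈ DY.plots n

theorem DSmooth.comp {DX : Diffeology X} {DY : Diffeology Y} {DZ : Diffeology Z}
    {g : Y → Z} {f : X → Y} (hg : DSmooth DY DZ g) (hf : DSmooth DX DY f) :
    DSmooth DX DZ (g ∘ f) := fun n p hp => hg n _ (hf n p hp)

theorem dsmooth_id {DX : Diffeology X} : DSmooth DX DX id := fun _ _ hp => hp

theorem dsmooth_const {DX : Diffeology X} {DY : Diffeology Y} (y : Y) :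
    DSmooth DX DY (fun _ => y) := fun n _ _ => DY.const_mem n y

/-- The diffeology induced along a map into a diffeological space
(e.g. the subset diffeology). -/
def Diffeology.induced (DX : Diffeology X) (f : Y → X) : Diffeology Y where
  plots n := {c | (f ∘ c) ∈ DX.plots n}
  const_mem n y := DX.const_mem n (f y)
  reparam_mem h hf := DX.reparam_mem h hf
  locality {n c} h := DX.locality fun x => by
    obtain ⟨U, hU, hx, q, hq, heq⟩ := h x
    exact ⟨U, hU, hx, f ∘ q, hq, fun y hy => congrArg f (heq y hy)⟩

/-- The pushforward diffeology along a map out of a diffeological space;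
for surjections this is the quotient diffeology. -/
def Diffeology.push (DX : Diffeology X) (f : X → Y) : Diffeology Y where
  plots n := {c | ∀ x : Eucl n, ∃ U : Set (Eucl n), IsOpen U ∧ x ∈ U ∧
    ((∀ y ∈ U, c y = c x) ∨ ∃ q ∈ DX.plots n, ∀ y ∈ U, c y = f (q y))}
  const_mem n y x := ⟨Set.univ, isOpen_univ, trivial, Or.inl fun _ _ => rfl⟩
  reparam_mem {n m c g} hc hg x := by
    obtain ⟨U, hU, hx, h⟩ := hc (g x)
    refine ⟨g ⁻¹' U, hU.preimage hg.continuous, hx, ?_⟩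
    rcases h with h | ⟨q, hq, heq⟩
    · exact Or.inl fun y hy => h (g y) hy
    · exact Or.inr ⟨q ∘ g, DX.reparam_mem hq hg, fun y hy => heq (g y) hy⟩
  locality {n c} h x := by
    obtain ⟨U, hU, hxU, q, hq, heq⟩ := h x
    obtain ⟨V, hV, hxV, h'⟩ := hq x
    refine ⟨U ∩ V, hU.inter hV, ⟨hxU, hxV⟩, ?_⟩
    rcases h' with h' | ⟨r, hr, her⟩
    · exact Or.inl fun y hy => by
        rw [heq y hy.1, h' y hy.2, ← heq x hxU]
    · exact Or.inr ⟨r, hr, fun y hy => (heq y hy.1).trans (her y hy.2)⟩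

/-- The product diffeology. -/
def Diffeology.prod (DX : Diffeology X) (DY : Diffeology Y) : Diffeology (X × Y) where
  plots n := {c | (Prod.fst ∘ c) ∈ DX.plots n ∧ (Prod.snd ∘ c) ∈ DY.plots n}
  const_mem n z := ⟨DX.const_mem n z.1, DY.const_mem n z.2⟩
  reparam_mem h hf := ⟨DX.reparam_mem h.1 hf, DY.reparam_mem h.2 hf⟩
  locality {n c} h := by
    constructor
    · exact DX.locality fun x => by
        obtain ⟨U, hU, hx, q, hq, heq⟩ := h x
        exact ⟨U, hU, hx, _, hq.1, fun y hy => congrArg Prod.fst (heq y hy)⟩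
    · exact DY.locality fun x => by
        obtain ⟨U, hU, hx, q, hq, heq⟩ := h x
        exact ⟨U, hU, hx, _, hq.2, fun y hy => congrArg Prod.snd (heq y hy)⟩

/-- The standard diffeology of a normed vector space: plots are the smooth maps. -/
def euclD (V : Type*) [NormedAddCommGroup V] [NormedSpace ℝ V] : Diffeology V where
  plots _ := {c | ContDiff ℝ ∞ c}
  const_mem _ x := by show ContDiff ℝ ∞ _; exact contDiff_const
  reparam_mem {n m p f} h hf := by
    have h' : ContDiff ℝ ∞ p := h
    exact h'.comp hf
  locality {n c} h := by
    show ContDiff ℝ ∞ c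
    rw [contDiff_iff_contDiffAt]
    intro x
    obtain ⟨U, hU, hx, q, hq, heq⟩ := h x
    have hq' : ContDiff ℝ ∞ q := hq
    exact (hq'.contDiffAt.congr_of_eventuallyEq
      (Filter.eventuallyEq_of_mem (hU.mem_nhds hx) heq))

/-- The diffeology of a smooth manifold: plots are the smooth maps. -/
def manifoldD {E H : Type*} [NormedAddCommGroup E] [NormedSpace ℝ E]
    [TopologicalSpace H] (I : ModelWithCorners ℝ E H)
    (M : Type*) [TopologicalSpace M] [ChartedSpace H M] : Diffeology M where
  plots n := {c | ContMDiff (𝓘(ℝ, Eucl n)) I (⊤ : ℕ∞) c}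
  const_mem _ x := by show ContMDiff _ _ _ _; exact contMDiff_const
  reparam_mem h hf := ContMDiff.comp h hf.contMDiff
  locality {n c} h := fun x => by
    obtain ⟨U, hU, hx, q, hq, heq⟩ := h x
    exact (hq x).congr_of_eventuallyEq
      (Filter.eventuallyEq_of_mem (hU.mem_nhds hx) heq)

/-- A smooth map is a subduction if every plot of the target locally lifts along it. -/
def DSubduction (DX : Diffeology X) (DY : Diffeology Y) (f : X → Y) : Prop :=
  DSmooth DX DY f ∧
  ∀ (n : ℕ), ∀ p ∈ DY.plots n, ∀ x : Eucl n, ∃ U : Set (Eucl n), IsOpen U ∧ x ∈ U ∧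
    ∃ q ∈ DX.plots n, ∀ y ∈ U, f (q y) = p y

section FunctionalDiffeology

variable {X Y : Type*}

/-- Projection onto the first block of coordinates. -/
def firstHalf (n m : ℕ) : Eucl (n + m) → Eucl n := fun v => v ∘ Fin.castAdd m

/-- Projection onto the second block of coordinates. -/
def secondHalf (n m : ℕ) : Eucl (n + m) → Eucl m := fun v => v ∘ Fin.natAdd n

theorem contDiff_firstHalf (n m : ℕ) : ContDiff ℝ ∞ (firstHalf n m) := by
  have : firstHalf n m =
      (ContinuousLinearMap.pi fun i : Fin n =>
        ContinuousLinearMap.proj (R := ℝ) (φ := fun _ : Fin (n + m) => ℝ) (Fin.castAdd m i)) := by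
    rfl
  rw [this]
  exact ContinuousLinearMap.contDiff _

theorem contDiff_secondHalf (n m : ℕ) : ContDiff ℝ ∞ (secondHalf n m) := by
  have : secondHalf n m =
      (ContinuousLinearMap.pi fun i : Fin m =>
        ContinuousLinearMap.proj (R := ℝ) (φ := fun _ : Fin (n + m) => ℝ) (Fin.natAdd n i)) := by
    rfl
  rw [this]
  exact ContinuousLinearMap.contDiff _

theorem firstHalf_append {n m : ℕ} (a : Eucl n) (b : Eucl m) :
    firstHalf n m (Fin.append a b) = a :=
  funext fun i => Fin.append_left a b i

theorem secondHalf_append {n m : ℕ} (a : Eucl n) (b : Eucl m) :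
    secondHalf n m (Fin.append a b) = b :=
  funext fun i => Fin.append_right a b i

/-- Bundled smooth maps between diffeological spaces. -/
structure DSm (DX : Diffeology X) (DY : Diffeology Y) where
  toFun : X → Y
  smooth : DSmooth DX DY toFun

/-- The functional diffeology on the space of smooth maps: a family of smooth maps is a plot
iff the joint evaluation against every plot of the source is a plot of the target. -/
def fnD (DX : Diffeology X) (DY : Diffeology Y) : Diffeology (DSm DX DY) where
  plots n := {c | ∀ (m : ℕ), ∀ p ∈ DX.plots m,
    (fun v : Eucl (n + m) => (c (firstHalf n m v)).toFun (p (secondHalf n m v))) ∈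
      DY.plots (n + m)}
  const_mem n f m p hp := by
    have : (fun v : Eucl (n + m) => f.toFun (p (secondHalf n m v)))
        = f.toFun ∘ (p ∘ secondHalf n m) := rfl
    show (fun v : Eucl (n + m) => f.toFun (p (secondHalf n m v))) ∈ DY.plots (n + m)
    rw [this]
    exact f.smooth _ _ (DX.reparam_mem hp (contDiff_secondHalf n m))
  reparam_mem {n k c g} hc hg m p hp := by
    set F : Eucl (k + m) → Eucl (n + m) :=
      fun v => Fin.append (g (firstHalf k m v)) (secondHalf k m v) with hF
    have hFs : ContDiff ℝ ∞ F := by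
      apply contDiff_pi.2
      intro i
      induction i using Fin.addCases with
      | left i =>
          have : (fun v : Eucl (k + m) => F v (Fin.castAdd m i))
              = fun v => g (firstHalf k m v) i := by
            funext v; simp [hF, Fin.append_left]
          rw [this]
          exact (contDiff_pi.1 (hg.comp (contDiff_firstHalf k m))) i
      | right i =>
          have : (fun v : Eucl (k + m) => F v (Fin.natAdd n i))
              = fun v => secondHalf k m v i := by
            funext v; simp [hF, Fin.append_right]
          rw [this]
          exact (contDiff_pi.1 (contDiff_secondHalf k m)) i
    have key := DY.reparam_mem (hc m p hp) hFs
    have : ((fun v : Eucl (n + m) => (c (firstHalf n m v)).toFun (p (secondHalf n m v))) ∘ F)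
        = fun v : Eucl (k + m) => ((c ∘ g) (firstHalf k m v)).toFun (p (secondHalf k m v)) := by
      funext v
      simp only [Function.comp_apply, hF, firstHalf_append, secondHalf_append]
    rwa [this] at key
  locality {n c} h m p hp := by
    apply DY.locality
    intro v
    obtain ⟨U, hU, hvU, d, hd, heq⟩ := h (firstHalf n m v)
    refine ⟨(firstHalf n m) ⁻¹' U, hU.preimage (contDiff_firstHalf n m).continuous, hvU,
      ⟨fun w => (d (firstHalf n m w)).toFun (p (secondHalf n m w)), hd m p hp,
        fun y hy => by rw [heq _ hy]⟩⟩

end FunctionalDiffeology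
section Paths

variable {X Y : Type*}

theorem dsmooth_of_contDiff {V W : Type*} [NormedAddCommGroup V] [NormedSpace ℝ V]
    [NormedAddCommGroup W] [NormedSpace ℝ W] {f : V → W} (hf : ContDiff ℝ ∞ f) :
    DSmooth (euclD V) (euclD W) f := by
  intro n p hp
  have hp' : ContDiff ℝ ∞ p := hp
  show ContDiff ℝ ∞ (f ∘ p)
  exact hf.comp hp'

/-- The standard diffeology on `ℝ`. -/
def rD : Diffeology ℝ := euclD ℝ

theorem rD_plots {n : ℕ} {c : Eucl n → ℝ} : c ∈ rD.plots n ↔ ContDiff ℝ ∞ c := Iff.rfl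

/-- A path with sitting instants in a diffeological space, presented by its canonical
extension to a smooth map on `ℝ` which is constant near `(-∞,0]` and near `[1,∞)`. -/
structure DPath {X : Type*} (D : Diffeology X) where
  toFun : ℝ → X
  smooth : DSmooth rD D toFun
  sit : ∃ ε > (0:ℝ), (∀ t ≤ ε, toFun t = toFun 0) ∧ (∀ t, 1 - ε ≤ t → toFun t = toFun 1)

namespace DPath

variable {D : Diffeology X}

/-- The constant path. -/
def const (D : Diffeology X) (x : X) : DPath D where
  toFun := fun _ => x
  smooth := dsmooth_const x
  sit := ⟨1/4, by norm_num, fun _ _ => rfl, fun _ _ => rfl⟩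

@[simp] theorem const_toFun (x : X) (t : ℝ) : (const D x).toFun t = x := rfl

/-- The reversed path. -/
def reverse (γ : DPath D) : DPath D where
  toFun t := γ.toFun (1 - t)
  smooth := by
    have h : DSmooth rD rD (fun t : ℝ => 1 - t) :=
      dsmooth_of_contDiff (contDiff_const.sub contDiff_id)
    exact γ.smooth.comp h
  sit := by
    obtain ⟨ε, hε, h0, h1⟩ := γ.sit
    refine ⟨ε, hε, fun t ht => ?_, fun t ht => ?_⟩
    · show γ.toFun (1 - t) = γ.toFun (1 - 0)
      have e : (1:ℝ) - 0 = 1 := by norm_num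
      rw [e, h1 _ (by linarith)]
    · show γ.toFun (1 - t) = γ.toFun (1 - 1)
      have e : (1:ℝ) - 1 = 0 := by norm_num
      rw [e, h0 _ (by linarith)]

@[simp] theorem reverse_toFun (γ : DPath D) (t : ℝ) : γ.reverse.toFun t = γ.toFun (1 - t) := rfl

/-- The composite path: first `γ₁`, then `γ₂`. -/
def comp (γ₁ γ₂ : DPath D) (h : γ₁.toFun 1 = γ₂.toFun 0) : DPath D where
  toFun t := if t ≤ 1/2 then γ₁.toFun (2*t) else γ₂.toFun (2*t - 1)
  smooth := by
    intro n c hc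
    have hc' : ContDiff ℝ ∞ c := hc
    apply D.locality
    intro x
    obtain ⟨ε₁, hε₁, h10, h11⟩ := γ₁.sit
    obtain ⟨ε₂, hε₂, h20, h21⟩ := γ₂.sit
    set ε : ℝ := min (min ε₁ ε₂) (1/2) with hεdef
    have hε : 0 < ε := by positivity
    have hεa : ε ≤ ε₁ := le_trans (min_le_left _ _) (min_le_left _ _)
    have hεb : ε ≤ ε₂ := le_trans (min_le_left _ _) (min_le_right _ _)
    rcases lt_trichotomy (c x) (1/2) with hx | hx | hx
    · refine ⟨c ⁻¹' (Set.Iio (1/2)), isOpen_Iio.preimage hc'.continuous, hx, ?_⟩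
      refine ⟨γ₁.toFun ∘ (fun y => 2 * c y), γ₁.smooth n _ (contDiff_const.mul hc'), ?_⟩
      intro y hy
      have : c y ≤ 1/2 := le_of_lt hy
      simp only [Function.comp_apply, this, if_pos]
    · refine ⟨c ⁻¹' (Set.Ioo (1/2 - ε/2) (1/2 + ε/2)), isOpen_Ioo.preimage hc'.continuous,
        by constructor <;> (rw [hx]; linarith), ?_⟩
      refine ⟨fun _ => γ₁.toFun 1, D.const_mem _ _, ?_⟩
      intro y hy
      obtain ⟨hy1, hy2⟩ := hy
      by_cases hc2 : c y ≤ 1/2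
      · simp only [Function.comp_apply, if_pos hc2]
        exact h11 _ (by linarith)
      · simp only [Function.comp_apply, if_neg hc2]
        rw [h20 _ (by linarith), ← h]
    · refine ⟨c ⁻¹' (Set.Ioi (1/2)), isOpen_Ioi.preimage hc'.continuous, hx, ?_⟩
      refine ⟨γ₂.toFun ∘ (fun y => 2 * c y - 1), γ₂.smooth n _
        ((contDiff_const.mul hc').sub contDiff_const), ?_⟩
      intro y hy
      have : ¬ (c y ≤ 1/2) := not_le.mpr hy
      simp only [Function.comp_apply, this, if_neg, not_false_iff]
  sit := by
    obtain ⟨ε₁, hε₁, h10, h11⟩ := γ₁.sit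
    obtain ⟨ε₂, hε₂, h20, h21⟩ := γ₂.sit
    set ε : ℝ := min (min ε₁ ε₂) (1/2) with hεdef
    have hε : 0 < ε := by positivity
    have hεa : ε ≤ ε₁ := le_trans (min_le_left _ _) (min_le_left _ _)
    have hεb : ε ≤ ε₂ := le_trans (min_le_left _ _) (min_le_right _ _)
    have hεc : ε ≤ 1/2 := min_le_right _ _
    refine ⟨ε/2, by positivity, ?_, ?_⟩
    · intro t ht
      have ht2 : t ≤ 1/2 := by linarith
      have h02 : (0:ℝ) ≤ 1/2 := by norm_num
      simp only [ht2, if_pos, h02]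
      have e : (2:ℝ) * 0 = 0 := by norm_num
      rw [e, h10 _ (by linarith)]
    · intro t ht
      have ht2 : ¬ (t ≤ 1/2) := by push_neg; linarith
      have h12 : ¬ ((1:ℝ) ≤ 1/2) := by norm_num
      simp only [ht2, if_neg, h12, not_false_iff]
      have e : (2:ℝ) * 1 - 1 = 1 := by norm_num
      rw [e, h21 _ (by linarith)]

end DPath

/-- The functional diffeology on the space of paths. -/
def pathD (D : Diffeology X) : Diffeology (DPath D) :=
  (fnD rD D).induced (fun γ => ⟨γ.toFun, γ.smooth⟩)

end Paths
section Thin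

variable {X Y : Type*}

/-- A smooth map between diffeological spaces has rank at most `k` if on every plot it locally
factors through smooth maps between Euclidean domains whose differential has rank at most `k`. -/
def HasRankLE (DX : Diffeology X) (DY : Diffeology Y) (f : X → Y) (k : ℕ) : Prop :=
  ∀ (n : ℕ), ∀ p ∈ DX.plots n, ∀ x : Eucl n,
    ∃ U : Set (Eucl n), IsOpen U ∧ x ∈ U ∧
    ∃ (m : ℕ) (d : Eucl m → Y), d ∈ DY.plots m ∧
    ∃ g : Eucl n → Eucl m, ContDiffOn ℝ ∞ g U ∧
      (∀ y ∈ U, f (p y) = d (g y)) ∧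
      (∀ y ∈ U, LinearMap.rank
        ((fderivWithin ℝ g U y : Eucl n →L[ℝ] Eucl m) : Eucl n →ₗ[ℝ] Eucl m) ≤ (k : Cardinal))

variable {D : Diffeology X}

/-- The adjoint map of a path of paths. -/
def pathAdj (h : DPath (pathD D)) : ℝ × ℝ → X :=
  fun st => (h.toFun st.1).toFun st.2

/-- A thin homotopy between two paths: an endpoint-fixing path in the path space whose
adjoint map has rank at most one. -/
structure IsThinPathHomotopy (γ₀ γ₁ : DPath D) (h : DPath (pathD D)) : Prop where
  source : h.toFun 0 = γ₀
  target : h.toFun 1 = γ₁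
  fix₀ : ∀ s : ℝ, (h.toFun s).toFun 0 = γ₀.toFun 0
  fix₁ : ∀ s : ℝ, (h.toFun s).toFun 1 = γ₀.toFun 1
  thin : HasRankLE (rD.prod rD) D (pathAdj h) 1

/-- An (endpoint-fixing, not necessarily thin) homotopy between two paths. -/
structure IsPathHomotopy (γ₀ γ₁ : DPath D) (h : DPath (pathD D)) : Prop where
  source : h.toFun 0 = γ₀
  target : h.toFun 1 = γ₁
  fix₀ : ∀ s : ℝ, (h.toFun s).toFun 0 = γ₀.toFun 0
  fix₁ : ∀ s : ℝ, (h.toFun s).toFun 1 = γ₀.toFun 1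

/-- The relation of being thin homotopic. -/
def PathThinRel (D : Diffeology X) (γ₀ γ₁ : DPath D) : Prop :=
  ∃ h, IsThinPathHomotopy γ₀ γ₁ h

/-- The relation of being (endpoint-fixing) homotopic. -/
def PathHomRel (D : Diffeology X) (γ₀ γ₁ : DPath D) : Prop :=
  ∃ h, IsPathHomotopy γ₀ γ₁ h

/-- The space of thin homotopy classes of paths. -/
def PCheck (D : Diffeology X) := Quot (PathThinRel D)

/-- The pushforward (quotient) diffeology on the space of thin homotopy classes of paths. -/
def pcheckD (D : Diffeology X) : Diffeology (PCheck D) := (pathD D).push (Quot.mk _)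

/-- The class of a path. -/
def PCheck.mk (γ : DPath D) : PCheck D := Quot.mk _ γ

/-- Endpoint evaluation on thin homotopy classes of paths. -/
def PCheck.ends : PCheck D → X × X :=
  Quot.lift (fun γ => (γ.toFun 0, γ.toFun 1)) (by
    rintro a b ⟨h, hh⟩
    have e0 : a.toFun 0 = b.toFun 0 := by
      rw [← congrArg (fun γ : DPath D => γ.toFun 0) hh.source,
        ← congrArg (fun γ : DPath D => γ.toFun 0) hh.target, hh.fix₀ 0, hh.fix₀ 1]
    have e1 : a.toFun 1 = b.toFun 1 := by
      rw [← congrArg (fun γ : DPath D => γ.toFun 1) hh.source,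
        ← congrArg (fun γ : DPath D => γ.toFun 1) hh.target, hh.fix₁ 0, hh.fix₁ 1]
    simp [e0, e1])

@[simp] theorem PCheck.ends_mk (γ : DPath D) :
    PCheck.ends (PCheck.mk γ) = (γ.toFun 0, γ.toFun 1) := rfl

/-- A diffeological space is connected if any two points are joined by a path. -/
def DConnected (D : Diffeology X) : Prop :=
  ∀ x y : X, ∃ γ : DPath D, γ.toFun 0 = x ∧ γ.toFun 1 = y

/-- A map on a diffeological space is locally constant if it takes equal values at
the endpoints of every path. -/
def DLocallyConstant {Z : Type*} (D : Diffeology X) (f : X → Z) : Prop :=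
  ∀ γ : DPath D, f (γ.toFun 0) = f (γ.toFun 1)

end Thin

section Loops

variable {X : Type*} {D : Diffeology X}

/-- A (free) loop in a diffeological space, presented as a smooth `1`-periodic map on `ℝ`
(equivalently, a smooth map on the circle `S¹ = ℝ/ℤ`). -/
structure DLoop (D : Diffeology X) where
  toFun : ℝ → X
  smooth : DSmooth rD D toFun
  periodic : ∀ t : ℝ, toFun (t + 1) = toFun t

/-- The functional diffeology on the free loop space. -/
def loopD (D : Diffeology X) : Diffeology (DLoop D) :=
  (fnD rD D).induced (fun τ => ⟨τ.toFun, τ.smooth⟩)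

/-- The adjoint map of a path of loops. -/
def loopAdj (h : DPath (loopD D)) : ℝ × ℝ → X :=
  fun st => (h.toFun st.1).toFun st.2

/-- The relation of thin homotopy on the free loop space: two loops are thin homotopic if they
are joined by a path of loops whose adjoint map has rank at most one. -/
def LoopThinRel (D : Diffeology X) (τ₀ τ₁ : DLoop D) : Prop :=
  ∃ h : DPath (loopD D), h.toFun 0 = τ₀ ∧ h.toFun 1 = τ₁ ∧
    HasRankLE (rD.prod rD) D (loopAdj h) 1

/-- The thin loop space: thin homotopy classes of loops. -/
def LCheck (D : Diffeology X) := Quot (LoopThinRel D)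

/-- The pushforward (quotient) diffeology on the thin loop space. -/
def lcheckD (D : Diffeology X) : Diffeology (LCheck D) := (loopD D).push (Quot.mk _)

/-- The thin homotopy class of a loop. -/
def LCheck.mk (τ : DLoop D) : LCheck D := Quot.mk _ τ

/-- The loop obtained from a closed path by gluing the two ends. -/
def glueLoop (γ : DPath D) (hγ : γ.toFun 1 = γ.toFun 0) : DLoop D where
  toFun t := γ.toFun (Int.fract t)
  periodic t := by show γ.toFun (Int.fract (t+1)) = γ.toFun (Int.fract t); rw [Int.fract_add_one]
  smooth := by
    intro n c hc
    have hc' : ContDiff ℝ ∞ c := hc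
    apply D.locality
    intro x
    obtain ⟨ε₀, hε₀, h0, h1⟩ := γ.sit
    set ε : ℝ := min ε₀ (1/2) with hεdef
    have hε : 0 < ε := by positivity
    have hεa : ε ≤ ε₀ := min_le_left _ _
    have hεb : ε ≤ 1/2 := min_le_right _ _
    set r : ℝ := Int.fract (c x) with hr
    have hr0 : 0 ≤ r := Int.fract_nonneg _
    have hr1 : r < 1 := Int.fract_lt_one _
    rcases lt_or_ge r (ε/2) with hcase | hcase
    · -- close to the integer `⌊c x⌋` from above: locally constant
      set k : ℤ := ⌊c x⌋ with hk
      refine ⟨c ⁻¹' (Metric.ball (k : ℝ) ε), (Metric.isOpen_ball).preimage hc'.continuous, ?_, ?_⟩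
      · show c x ∈ Metric.ball (k:ℝ) ε
        rw [Metric.mem_ball, Real.dist_eq, abs_lt]
        have : c x - (k:ℝ) = r := by rw [hr, hk]; exact (Int.self_sub_floor _).symm
        constructor <;> linarith [hr0, hr1, hcase, hε]
      · refine ⟨fun _ => γ.toFun 0, D.const_mem _ _, ?_⟩
        intro y hy
        have hy' : |c y - (k:ℝ)| < ε := by
          have := Metric.mem_ball.mp hy
          rwa [Real.dist_eq] at this
        rw [abs_lt] at hy'
        show γ.toFun (Int.fract (c y)) = γ.toFun 0
        rcases le_or_gt (k:ℝ) (c y) with hge | hlt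
        · have hfl : ⌊c y⌋ = k := by
            rw [Int.floor_eq_iff]
            constructor
            · exact_mod_cast hge
            · push_cast; linarith
          have : Int.fract (c y) = c y - (k:ℝ) := by
            rw [Int.fract, hfl]
          rw [this]
          exact h0 _ (by linarith)
        · have hfl : ⌊c y⌋ = k - 1 := by
            rw [Int.floor_eq_iff]
            constructor
            · push_cast; linarith
            · push_cast; linarith
          have : Int.fract (c y) = c y - (k:ℝ) + 1 := by
            rw [Int.fract, hfl]; push_cast; ring
          rw [this, h1 _ (by linarith), hγ]
    · -- in the interior of the interval `(⌊c x⌋, ⌊c x⌋ + 1)`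
      set k : ℤ := ⌊c x⌋ with hk
      refine ⟨c ⁻¹' (Set.Ioo (k:ℝ) ((k:ℝ)+1)), isOpen_Ioo.preimage hc'.continuous, ?_, ?_⟩
      · show c x ∈ Set.Ioo (k:ℝ) ((k:ℝ)+1)
        have heq : c x - (k:ℝ) = r := by rw [hr, hk]; exact (Int.self_sub_floor _).symm
        constructor
        · linarith [hε, hcase]
        · linarith [hr1]
      · refine ⟨γ.toFun ∘ (fun y => c y - (k:ℝ)), γ.smooth n _ (hc'.sub contDiff_const), ?_⟩
        intro y hy
        obtain ⟨hy1, hy2⟩ := hy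
        have hfl : ⌊c y⌋ = k := by
          rw [Int.floor_eq_iff]
          exact ⟨le_of_lt (by exact_mod_cast hy1), by exact_mod_cast hy2⟩
        show γ.toFun (Int.fract (c y)) = γ.toFun (c y - (k:ℝ))
        rw [Int.fract, hfl]

/-- The loop associated to a pair of paths with common initial point and common end point,
glued from `γ₂⁻¹ ⋆ γ₁`. -/
def loopOf (γ₁ γ₂ : DPath D) (h0 : γ₁.toFun 0 = γ₂.toFun 0) (h1 : γ₁.toFun 1 = γ₂.toFun 1) :
    DLoop D :=
  glueLoop (γ₁.comp γ₂.reverse (by simpa using h1))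
    (by
      show (γ₁.comp γ₂.reverse _).toFun 1 = (γ₁.comp γ₂.reverse _).toFun 0
      simp only [DPath.comp]
      norm_num [DPath.reverse]
      exact h0.symm)

end Loops
section Fusion

variable {X A : Type*} {D : Diffeology X}

/-- The fusion property of a map on the thin loop space, with respect to triples of
(thin homotopy classes of) paths with a common initial point and a common end point. -/
def IsFusion [Mul A] (D : Diffeology X) (f : LCheck D → A) : Prop :=
  ∀ (γ₁ γ₂ γ₃ : DPath D)
    (h120 : γ₁.toFun 0 = γ₂.toFun 0) (h121 : γ₁.toFun 1 = γ₂.toFun 1)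
    (h230 : γ₂.toFun 0 = γ₃.toFun 0) (h231 : γ₂.toFun 1 = γ₃.toFun 1),
    f (LCheck.mk (loopOf γ₁ γ₂ h120 h121)) * f (LCheck.mk (loopOf γ₂ γ₃ h230 h231))
      = f (LCheck.mk (loopOf γ₁ γ₃ (h120.trans h230) (h121.trans h231)))

/-- A fusion map on the thin loop space: a smooth map satisfying the fusion property. -/
structure FusionMap (D : Diffeology X) (DA : Diffeology A) [Mul A] where
  toFun : LCheck D → A
  smooth : DSmooth (lcheckD D) DA toFun
  fusion : IsFusion D toFun

/-- The diffeology on the space of fusion maps, as a subspace of the space of all smooth maps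
on the thin loop space. -/
def fusD (D : Diffeology X) (DA : Diffeology A) [Mul A] : Diffeology (FusionMap D DA) :=
  (fnD (lcheckD D) DA).induced (fun f => ⟨f.toFun, f.smooth⟩)

/-- Two fusion maps are fusion homotopic if they are connected by a path in the space of
fusion maps. -/
def FusionHomotopic (D : Diffeology X) (DA : Diffeology A) [Mul A]
    (f₀ f₁ : FusionMap D DA) : Prop :=
  ∃ h : DPath (fusD D DA), h.toFun 0 = f₀ ∧ h.toFun 1 = f₁

end Fusion

section LoopToPath

variable {X : Type*} {D : Diffeology X}

/-- A fixed smoothing function: `0` for `t ≤ 1/4`, and `1` for `t ≥ 3/4`. -/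
def sphi : ℝ → ℝ := fun t => Real.smoothTransition (2*t - 1/2)

theorem sphi_contDiff : ContDiff ℝ ∞ sphi :=
  Real.smoothTransition.contDiff.comp ((contDiff_const.mul contDiff_id).sub contDiff_const)

theorem sphi_eq_zero {t : ℝ} (ht : t ≤ 1/4) : sphi t = 0 :=
  Real.smoothTransition.zero_of_nonpos (by simp [sphi]; linarith)

theorem sphi_eq_one {t : ℝ} (ht : 3/4 ≤ t) : sphi t = 1 :=
  Real.smoothTransition.one_of_one_le (by simp [sphi]; linarith)

/-- The closed path underlying a loop, obtained by reparametrising with a smoothing function. -/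
def DLoop.toPath (τ : DLoop D) : DPath D where
  toFun t := τ.toFun (sphi t)
  smooth := τ.smooth.comp (dsmooth_of_contDiff sphi_contDiff)
  sit := by
    refine ⟨1/4, by norm_num, fun t ht => ?_, fun t ht => ?_⟩
    · show τ.toFun (sphi t) = τ.toFun (sphi 0)
      rw [sphi_eq_zero ht, sphi_eq_zero (by norm_num)]
    · show τ.toFun (sphi t) = τ.toFun (sphi 1)
      rw [sphi_eq_one (by linarith), sphi_eq_one (by norm_num)]

@[simp] theorem DLoop.toPath_zero (τ : DLoop D) : τ.toPath.toFun 0 = τ.toFun 0 := by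
  show τ.toFun (sphi 0) = τ.toFun 0
  rw [sphi_eq_zero (by norm_num)]

@[simp] theorem DLoop.toPath_one (τ : DLoop D) : τ.toPath.toFun 1 = τ.toFun 1 := by
  show τ.toFun (sphi 1) = τ.toFun 1
  rw [sphi_eq_one (by norm_num)]

end LoopToPath
section Forms

variable {X Y Z : Type*}

/-- A `V`-valued diffeological 1-form: a compatible family of ordinary (smooth) 1-forms,
one for each plot. -/
structure DOneForm {Z : Type*} (DZ : Diffeology Z) (V : Type*)
    [NormedAddCommGroup V] [NormedSpace ℝ V] where
  form : ∀ {n : ℕ} (p : Eucl n → Z), p ∈ DZ.plots n → (Eucl n → (Eucl n →L[ℝ] V))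
  smooth : ∀ {n : ℕ} (p : Eucl n → Z) (hp : p ∈ DZ.plots n), ContDiff ℝ ∞ (form p hp)
  compat : ∀ {n m : ℕ} (p : Eucl n → Z) (hp : p ∈ DZ.plots n)
    (f : Eucl m → Eucl n) (hf : ContDiff ℝ ∞ f) (x : Eucl m),
    form (p ∘ f) (DZ.reparam_mem hp hf) x = (form p hp (f x)).comp (fderiv ℝ f x)

variable {V : Type*} [NormedAddCommGroup V] [NormedSpace ℝ V]

/-- Pullback of a diffeological 1-form along a smooth map. -/
def DOneForm.pullback {DY : Diffeology Y} {DZ : Diffeology Z} (f : Z → Y)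
    (hf : DSmooth DZ DY f) (om : DOneForm DY V) : DOneForm DZ V where
  form p hp := om.form (f ∘ p) (hf _ p hp)
  smooth p hp := om.smooth (f ∘ p) (hf _ p hp)
  compat p hp g hg x := om.compat (f ∘ p) (hf _ p hp) g hg x

/-- The exterior derivative of a 1-form along a plot, evaluated on constant vector fields:
`dom(v,w) = ∂_v (om(w)) - ∂_w (om(v))`. -/
def dOneForm {DZ : Diffeology Z} (om : DOneForm DZ V) {n : ℕ} (p : Eucl n → Z)
    (hp : p ∈ DZ.plots n) (x v w : Eucl n) : V :=
  fderiv ℝ (fun y => om.form p hp y w) x v - fderiv ℝ (fun y => om.form p hp y v) x w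

/-- Flatness of a 1-form with respect to a bilinear bracket on its coefficients:
the curvature `K_ω = dω + [ω ∧ ω]` vanishes, plotwise. -/
def DOneForm.IsFlatWith {DZ : Diffeology Z} (bracket : V → V → V) (om : DOneForm DZ V) : Prop :=
  ∀ {n : ℕ} (p : Eucl n → Z) (hp : p ∈ DZ.plots n) (x v w : Eucl n),
    dOneForm om p hp x v w + bracket (om.form p hp x v) (om.form p hp x w) = 0

end Forms

section LieHelpers

variable {EG HG G : Type*} [NormedAddCommGroup EG] [NormedSpace ℝ EG]
  [TopologicalSpace HG] (IG : ModelWithCorners ℝ EG HG)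
  [TopologicalSpace G] [ChartedSpace HG G] [Group G]

/-- The pullback of the left-invariant Maurer-Cartan form of a Lie group along a smooth family
`g : ℝⁿ → G`: its value at `x` is the "left logarithmic derivative"
`θ(dg_x) = d(L_{g(x)⁻¹} ∘ g)_x`. -/
def mcDeriv {n : ℕ} (g : Eucl n → G) (x : Eucl n) : Eucl n →L[ℝ] EG :=
  mfderiv 𝓘(ℝ, Eucl n) IG (fun y => (g x)⁻¹ * g y) x

/-- The pullback of the right-invariant Maurer-Cartan form of a Lie group along a smooth family
`g : ℝⁿ → G`. -/
def rmcDeriv {n : ℕ} (g : Eucl n → G) (x : Eucl n) : Eucl n →L[ℝ] EG :=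
  mfderiv 𝓘(ℝ, Eucl n) IG (fun y => g y * (g x)⁻¹) x

/-- The adjoint action of a Lie group on its Lie algebra `𝔤 = T₁G`, as the differential at `1`
of conjugation. -/
def gAd (a : G) : EG →L[ℝ] EG :=
  mfderiv IG IG (fun x => a * x * a⁻¹) (1 : G)

/-- The Lie bracket on the Lie algebra `𝔤 = T₁G` of a Lie group, as the differential of the
adjoint representation at `1`. -/
def gBracket (G' : Type*) [TopologicalSpace G'] [ChartedSpace HG G'] [Group G'] (v w : EG) :
    EG :=
  letI F : EG →L[ℝ] (EG →L[ℝ] EG) := mfderiv IG 𝓘(ℝ, EG →L[ℝ] EG) (gAd (G := G') IG) (1 : G')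
  F v w

end LieHelpers

section Bundles

universe u v w

variable {X : Type u} {G : Type v}

/-- A diffeological principal `G`-bundle over a diffeological space: a subduction with a
fibre-preserving smooth right `G`-action which is free and fibrewise transitive, with smooth
division map; equivalently, `P × G → P ×_X P, (p,g) ↦ (p, p·g)` is a diffeomorphism. -/
structure DPrincipal (D : Diffeology X) (G : Type v) [Group G] (DG : Diffeology G) :
    Type (max u v (w+1)) where
  E : Type w
  DE : Diffeology E
  proj : E → X
  act : E → G → E
  act_one : ∀ q, act q 1 = q
  act_mul : ∀ q g h, act (act q g) h = act q (g * h)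
  proj_act : ∀ q g, proj (act q g) = proj q
  subd : DSubduction DE D proj
  act_smooth : DSmooth (DE.prod DG) DE (fun z => act z.1 z.2)
  gp : E → E → G
  gp_smooth : DSmooth ((DE.prod DE).induced
      (Subtype.val : {z : E × E // proj z.1 = proj z.2} → E × E)) DG
      (fun z => gp z.val.1 z.val.2)
  gp_act : ∀ q g, gp q (act q g) = g
  act_gp : ∀ q₁ q₂, proj q₁ = proj q₂ → act q₁ (gp q₁ q₂) = q₂

variable [Group G] {D : Diffeology X} {DG : Diffeology G}

/-- A morphism of diffeological principal bundles: a smooth equivariant map over the base. -/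
def IsBundleHom (P Q : DPrincipal D G DG) (φ : P.E → Q.E) : Prop :=
  DSmooth P.DE Q.DE φ ∧ (∀ q, Q.proj (φ q) = P.proj q) ∧
    ∀ q g, φ (P.act q g) = Q.act (φ q) g

/-- Isomorphy of diffeological principal bundles. -/
def BundleIso (P Q : DPrincipal D G DG) : Prop :=
  ∃ (φ : P.E → Q.E) (ψ : Q.E → P.E), IsBundleHom P Q φ ∧ IsBundleHom Q P ψ ∧
    (∀ q, ψ (φ q) = q) ∧ (∀ q, φ (ψ q) = q)

end Bundles
section Squash

/-- A smooth squashing map into a given open neighbourhood, equal to the identity near the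
centre. -/
theorem exists_squash {n : ℕ} (x : Eucl n) {U : Set (Eucl n)} (hU : IsOpen U) (hx : x ∈ U) :
    ∃ r : Eucl n → Eucl n, ContDiff ℝ ∞ r ∧ (∀ y, r y ∈ U) ∧
      ∃ V : Set (Eucl n), IsOpen V ∧ x ∈ V ∧ ∀ y ∈ V, r y = y := by
  obtain ⟨δ, hδ, hball⟩ := Metric.isOpen_iff.mp hU x hx
  set Q : Eucl n → ℝ := fun y => ∑ i, (y i - x i)^2 with hQdef
  have hQc : ContDiff ℝ ∞ Q := by
    apply ContDiff.sum
    intro i _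
    exact ((contDiff_pi.1 contDiff_id i).sub contDiff_const).pow 2
  have hQ0 : ∀ y, 0 ≤ Q y := fun y => Finset.sum_nonneg fun i _ => sq_nonneg _
  have hQcoord : ∀ y i, (y i - x i)^2 ≤ Q y := fun y i => by
    rw [hQdef]
    exact Finset.single_le_sum (f := fun j => (y j - x j)^2) (fun j _ => sq_nonneg _)
      (Finset.mem_univ i)
  set a : ℝ := δ^2/4 with ha
  have ha0 : 0 < a := by positivity
  set c : Eucl n → ℝ := fun y => 1 - Real.smoothTransition (Q y / a - 1) with hc
  have hc01 : ∀ y, 0 ≤ c y ∧ c y ≤ 1 := fun y =>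
    ⟨by simp only [hc, sub_nonneg]; exact Real.smoothTransition.le_one _,
     by simp only [hc]; linarith [Real.smoothTransition.nonneg (Q y / a - 1)]⟩
  refine ⟨fun y => x + c y • (y - x), ?_, ?_, ?_⟩
  · apply ContDiff.add contDiff_const
    refine ContDiff.smul (f := fun y => c y) (g := fun y => y - x) ?_ ?_
    · exact contDiff_const.sub
        (Real.smoothTransition.contDiff.comp ((hQc.div_const a).sub contDiff_const))
    · exact contDiff_id.sub contDiff_const
  · intro y
    apply hball
    rw [Metric.mem_ball]
    rw [dist_pi_lt_iff hδ]
    intro i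
    have hcoord : (x + c y • (y - x)) i - x i = c y * (y i - x i) := by
      simp only [Pi.add_apply, Pi.smul_apply, Pi.sub_apply, smul_eq_mul]
      ring
    rw [Real.dist_eq, hcoord]
    rcases le_or_gt (Q y) (2*a) with hQle | hQgt
    · have h1 : (c y * (y i - x i))^2 < δ^2 := by
        have h2 : (y i - x i)^2 ≤ 2*a := le_trans (hQcoord y i) hQle
        have h3 : (c y)^2 ≤ 1 := by nlinarith [(hc01 y).1, (hc01 y).2]
        have h4 : (2:ℝ)*a < δ^2 := by rw [ha]; nlinarith
        calc (c y * (y i - x i))^2 = (c y)^2 * (y i - x i)^2 := by ring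
        _ ≤ 1 * (2*a) := by
            apply mul_le_mul h3 h2 (sq_nonneg _) zero_le_one
        _ < δ^2 := by linarith
      nlinarith [abs_nonneg (c y * (y i - x i)), sq_abs (c y * (y i - x i)), h1, hδ]
    · have hT : Real.smoothTransition (Q y / a - 1) = 1 := by
        apply Real.smoothTransition.one_of_one_le
        rw [le_sub_iff_add_le, le_div_iff₀ ha0]
        linarith
      have : c y = 0 := by simp [hc, hT]
      rw [this]
      simpa using hδ
  · refine ⟨{y | Q y < a}, ?_, ?_, ?_⟩
    · exact isOpen_lt hQc.continuous continuous_const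
    · show Q x < a
      have : Q x = 0 := by simp [hQdef]
      rw [this]; exact ha0
    · intro y hy
      have hT : Real.smoothTransition (Q y / a - 1) = 0 := by
        apply Real.smoothTransition.zero_of_nonpos
        rw [sub_nonpos, div_le_one ha0]
        exact le_of_lt hy
      have hcy : c y = 1 := by simp [hc, hT]
      show x + c y • (y - x) = y
      rw [hcy, one_smul, add_sub_cancel]

end Squash
section Connections

universe u v w

variable {X : Type u}
variable {EG HG G : Type*} [NormedAddCommGroup EG] [NormedSpace ℝ EG]
  [TopologicalSpace HG] {IG : ModelWithCorners ℝ EG HG}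
  [TopologicalSpace G] [ChartedSpace HG G] [Group G]
variable {D : Diffeology X}

/-- A connection on a diffeological principal bundle whose structure group is a Lie group:
a Lie-algebra valued 1-form `ω` on the total space with `ρ*ω = Ad⁻¹_g(pr*ω) + g*θ`,
where `θ` is the left-invariant Maurer-Cartan form. -/
structure DConn (IG : ModelWithCorners ℝ EG HG) [TopologicalSpace G] [ChartedSpace HG G]
    (P : DPrincipal D G (manifoldD IG G)) : Type _ where
  om : DOneForm P.DE EG
  conn : ∀ {n : ℕ} (p : Eucl n → P.E) (hp : p ∈ P.DE.plots n)
      (g : Eucl n → G) (hg : g ∈ (manifoldD IG G).plots n) (x : Eucl n),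
    om.form (fun y => P.act (p y) (g y))
        (P.act_smooth n (fun y => (p y, g y)) ⟨hp, hg⟩) x
      = ((gAd IG ((g x)⁻¹)).comp (om.form p hp x)) + mcDeriv IG g x

variable {P Q : DPrincipal D G (manifoldD IG G)}

/-- The curvature of a connection vanishes: flatness, with respect to the Lie bracket of the
structure group. -/
def DConn.IsFlat (C : DConn IG P) : Prop :=
  C.om.IsFlatWith (gBracket IG G)

/-- A connection-preserving morphism of diffeological principal bundles with connection. -/
def IsConnHom (C : DConn IG P) (C' : DConn IG Q) (φ : P.E → Q.E) : Prop :=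
  ∃ h : IsBundleHom P Q φ,
    ∀ {n : ℕ} (p : Eucl n → P.E) (hp : p ∈ P.DE.plots n) (x : Eucl n),
      C'.om.form (φ ∘ p) (h.1 n p hp) x = C.om.form p hp x

/-- Isomorphy of diffeological principal bundles with connection. -/
def ConnIso (C : DConn IG P) (C' : DConn IG Q) : Prop :=
  ∃ (φ : P.E → Q.E) (ψ : Q.E → P.E), IsConnHom C C' φ ∧ IsConnHom C' C ψ ∧
    (∀ q, ψ (φ q) = q) ∧ (∀ q, φ (ψ q) = q)

/-- The standard plot of `ℝ` with one-dimensional domain. -/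
def e1Plot : Eucl 1 → ℝ := fun v => v 0

theorem e1Plot_mem : e1Plot ∈ rD.plots 1 := by
  show ContDiff ℝ ∞ e1Plot
  exact (ContinuousLinearMap.proj (R := ℝ) (φ := fun _ : Fin 1 => ℝ) 0).contDiff

/-- The plot of a diffeological space associated to a path. -/
def DPath.plot1 {D : Diffeology X} (γ : DPath D) : Eucl 1 → X := γ.toFun ∘ e1Plot

theorem DPath.plot1_mem {D : Diffeology X} (γ : DPath D) : γ.plot1 ∈ D.plots 1 :=
  γ.smooth 1 e1Plot e1Plot_mem

/-- A path in the total space is horizontal if the connection form vanishes along it. -/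
def IsHorizontal (C : DConn IG P) (γ : DPath P.DE) : Prop :=
  ∀ v : Eucl 1, C.om.form γ.plot1 γ.plot1_mem v = 0

/-- The parallel transport relation: `q` is transported to `q'` along `γ` iff there is a
horizontal lift of `γ` starting at `q` and ending at `q'`. -/
def Transports (C : DConn IG P) (γ : DPath D) (q q' : P.E) : Prop :=
  ∃ γh : DPath P.DE, (∀ t : ℝ, P.proj (γh.toFun t) = γ.toFun t) ∧
    IsHorizontal C γh ∧ γh.toFun 0 = q ∧ γh.toFun 1 = q'

/-- `hol` is a holonomy map for the connection `C`: for every loop `τ` and every point `q` of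
the fibre over the base point of `τ`, parallel transport around `τ` followed by the action of
`hol τ` is the identity. -/
def IsHolonomyOf (C : DConn IG P) (hol : DLoop D → G) : Prop :=
  ∀ (τ : DLoop D) (q : P.E), P.proj q = τ.toFun 0 →
    Transports C τ.toPath q (P.act q (hol τ)⁻¹)

end Connections

section Pullback

universe u v w

variable {X : Type u} {Y : Type*}
variable {G : Type v} [Group G]
variable {D : Diffeology X} {DY : Diffeology Y} {DG : Diffeology G}

/-- The diffeology on the fibred product of two bundles. -/
def fiberProdD (P : DPrincipal D G DG) (Q : DPrincipal D G DG) :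
    Diffeology {z : P.E × Q.E // P.proj z.1 = Q.proj z.2} :=
  (P.DE.prod Q.DE).induced Subtype.val

/-- The pullback of a diffeological principal bundle along a smooth map. -/
def DPrincipal.pullback (P : DPrincipal D G DG) (f : Y → X) (hf : DSmooth DY D f) :
    DPrincipal DY G DG where
  E := {z : Y × P.E // f z.1 = P.proj z.2}
  DE := (DY.prod P.DE).induced Subtype.val
  proj z := z.val.1
  act z g := ⟨(z.val.1, P.act z.val.2 g), by rw [P.proj_act]; exact z.prop⟩
  act_one z := by
    apply Subtype.ext
    show (z.val.1, P.act z.val.2 1) = z.val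
    rw [P.act_one]
  act_mul z g h := by
    apply Subtype.ext
    show (z.val.1, P.act (P.act z.val.2 g) h) = (z.val.1, P.act z.val.2 (g*h))
    rw [P.act_mul]
  proj_act z g := rfl
  subd := by
    constructor
    · intro n p hp
      have hp' : (Subtype.val ∘ p) ∈ (DY.prod P.DE).plots n := hp
      exact hp'.1
    · intro n p hp x
      obtain ⟨U, hU, hxU, q, hq, heq⟩ := P.subd.2 n (f ∘ p) (hf n p hp) x
      obtain ⟨r, hr, hrU, V, hV, hxV, hid⟩ := exists_squash x hU hxU
      refine ⟨V, hV, hxV, fun y => ⟨(p (r y), q (r y)), (heq _ (hrU y)).symm⟩, ?_, ?_⟩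
      · show ((p ∘ r) ∈ DY.plots n) ∧ ((q ∘ r) ∈ P.DE.plots n)
        exact ⟨DY.reparam_mem hp hr, P.DE.reparam_mem hq hr⟩
      · intro y hy
        show p (r y) = p y
        rw [hid y hy]
  act_smooth := by
    intro n c hc
    have hc' : ((Prod.fst ∘ c) ∈ ((DY.prod P.DE).induced
        (Subtype.val : {z : Y × P.E // f z.1 = P.proj z.2} → Y × P.E)).plots n)
        ∧ ((Prod.snd ∘ c) ∈ DG.plots n) := hc
    have hc1 : ((fun y => ((c y).1.val.1)) ∈ DY.plots n)
        ∧ ((fun y => ((c y).1.val.2)) ∈ P.DE.plots n) := hc'.1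
    show ((fun y => ((c y).1.val.1)) ∈ DY.plots n)
        ∧ ((fun y => P.act ((c y).1.val.2) ((c y).2)) ∈ P.DE.plots n)
    refine ⟨hc1.1, ?_⟩
    exact P.act_smooth n (fun y => (((c y).1.val.2), (c y).2)) ⟨hc1.2, hc'.2⟩
  gp z w := P.gp z.val.2 w.val.2
  gp_smooth := by
    intro n c hc
    have hc' : ((fun y => ((c y).val.1)) ∈ ((DY.prod P.DE).induced
          (Subtype.val : {z : Y × P.E // f z.1 = P.proj z.2} → Y × P.E)).plots n)
        ∧ ((fun y => ((c y).val.2)) ∈ ((DY.prod P.DE).induced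
          (Subtype.val : {z : Y × P.E // f z.1 = P.proj z.2} → Y × P.E)).plots n) := hc
    have m1 : ((fun y => (((c y).val.1).val.1)) ∈ DY.plots n)
        ∧ ((fun y => (((c y).val.1).val.2)) ∈ P.DE.plots n) := hc'.1
    have m2 : ((fun y => (((c y).val.2).val.1)) ∈ DY.plots n)
        ∧ ((fun y => (((c y).val.2).val.2)) ∈ P.DE.plots n) := hc'.2
    have hfib : ∀ y, P.proj (((c y).val.1).val.2) = P.proj (((c y).val.2).val.2) := by
      intro y
      have e1 : f (((c y).val.1).val.1) = P.proj (((c y).val.1).val.2) := ((c y).val.1).prop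
      have e2 : f (((c y).val.2).val.1) = P.proj (((c y).val.2).val.2) := ((c y).val.2).prop
      have e0 : ((c y).val.1).val.1 = ((c y).val.2).val.1 := (c y).prop
      rw [← e1, ← e2, e0]
    exact P.gp_smooth n
      (fun y => ⟨((((c y).val.1).val.2), (((c y).val.2).val.2)), hfib y⟩) ⟨m1.2, m2.2⟩
  gp_act z g := P.gp_act z.val.2 g
  act_gp z w h := by
    apply Subtype.ext
    have h1 : z.val.1 = w.val.1 := h
    have h2 : P.proj z.val.2 = P.proj w.val.2 := by
      rw [← z.prop, ← w.prop, h1]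
    show (z.val.1, P.act z.val.2 (P.gp z.val.2 w.val.2)) = w.val
    rw [P.act_gp _ _ h2, h1]

end Pullback
section PullbackConn

universe u v

variable {X : Type u} {Y : Type*}
variable {EG HG G : Type*} [NormedAddCommGroup EG] [NormedSpace ℝ EG]
  [TopologicalSpace HG] {IG : ModelWithCorners ℝ EG HG}
  [TopologicalSpace G] [ChartedSpace HG G] [Group G]
variable {D : Diffeology X} {DY : Diffeology Y}

/-- The pullback connection on the pullback of a diffeological principal bundle with
connection along a smooth map. -/
def DConn.pullback {P : DPrincipal D G (manifoldD IG G)} (C : DConn IG P)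
    (f : Y → X) (hf : DSmooth DY D f) : DConn IG (P.pullback f hf) where
  om := C.om.pullback (fun z => z.val.2) (by
    intro n c hc
    have hc' : ((fun y => ((c y).val.1)) ∈ DY.plots n)
        ∧ ((fun y => ((c y).val.2)) ∈ P.DE.plots n) := hc
    exact hc'.2)
  conn := by
    intro n p hp g hg x
    have hp' : ((fun y => ((p y).val.1)) ∈ DY.plots n)
        ∧ ((fun y => ((p y).val.2)) ∈ P.DE.plots n) := hp
    exact C.conn (fun y => (p y).val.2) hp'.2 g hg x

end PullbackConn

section Tensor

universe u v

variable {X : Type u} {A : Type v} [CommGroup A]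
variable {D : Diffeology X} {DA : Diffeology A}

/-- A map exhibiting `R` as the tensor product of the principal `A`-bundles `P` and `Q`
(for an abelian group `A`): a smooth fibrewise "bilinear" map `P ×_X Q → R`. -/
def IsTensorWitness (P Q R : DPrincipal D A DA) (b : P.E → Q.E → R.E) : Prop :=
  DSmooth (fiberProdD P Q) R.DE (fun z => b z.val.1 z.val.2) ∧
  (∀ q₁ q₂, P.proj q₁ = Q.proj q₂ → R.proj (b q₁ q₂) = P.proj q₁) ∧
  (∀ q₁ q₂ a, b (P.act q₁ a) q₂ = R.act (b q₁ q₂) a) ∧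
  (∀ q₁ q₂ a, b q₁ (Q.act q₂ a) = R.act (b q₁ q₂) a)

variable {EA HA : Type*} [NormedAddCommGroup EA] [NormedSpace ℝ EA]
  [TopologicalSpace HA] {IA : ModelWithCorners ℝ EA HA}
  [TopologicalSpace A] [ChartedSpace HA A]

/-- A map exhibiting `R` (with connection) as the tensor product of the principal `A`-bundles
with connection `P` and `Q`: additionally, the connection of `R` pulls back to the sum of the
connections. -/
def IsTensorConnWitness {P Q R : DPrincipal D A (manifoldD IA A)}
    (CP : DConn IA P) (CQ : DConn IA Q) (CR : DConn IA R)
    (b : P.E → Q.E → R.E) : Prop :=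
  ∃ hw : IsTensorWitness P Q R b,
    ∀ {n : ℕ} (p₁ : Eucl n → P.E) (hp₁ : p₁ ∈ P.DE.plots n)
      (p₂ : Eucl n → Q.E) (hp₂ : p₂ ∈ Q.DE.plots n)
      (hfib : ∀ y, P.proj (p₁ y) = Q.proj (p₂ y)) (x : Eucl n),
      CR.om.form (fun y => b (p₁ y) (p₂ y))
          (hw.1 n (fun y => ⟨(p₁ y, p₂ y), hfib y⟩) ⟨hp₁, hp₂⟩) x
        = CP.om.form p₁ hp₁ x + CQ.om.form p₂ hp₂ x

end Tensor
section SmoothBundles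

universe u v w

variable {EM HM : Type*} [NormedAddCommGroup EM] [NormedSpace ℝ EM] [TopologicalSpace HM]
  {EG HG : Type*} [NormedAddCommGroup EG] [NormedSpace ℝ EG] [TopologicalSpace HG]

theorem prodManifoldD_plots_iff {M N : Type*} [TopologicalSpace M] [ChartedSpace HM M]
    [TopologicalSpace N] [ChartedSpace HG N] (IM : ModelWithCorners ℝ EM HM)
    (IG : ModelWithCorners ℝ EG HG) {n : ℕ} {c : Eucl n → M × N} :
    c ∈ ((manifoldD IM M).prod (manifoldD IG N)).plots n ↔
      ContMDiff 𝓘(ℝ, Eucl n) (IM.prod IG) (⊤ : ℕ∞) c := by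
  constructor
  · rintro ⟨h1, h2⟩
    have h1' : ContMDiff 𝓘(ℝ, Eucl n) IM (⊤ : ℕ∞) (Prod.fst ∘ c) := h1
    have h2' : ContMDiff 𝓘(ℝ, Eucl n) IG (⊤ : ℕ∞) (Prod.snd ∘ c) := h2
    exact h1'.prodMk h2'
  · intro h
    exact ⟨contMDiff_fst.comp h, contMDiff_snd.comp h⟩

/-- A smooth principal `G`-bundle over a smooth manifold `M`, for a Lie group `G`:
a smooth manifold `P` with smooth projection and smooth free fibrewise transitive
right `G`-action (with smooth division map), which is locally trivial (expressed via
smooth local sections; together with the smooth division map these provide smooth local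
trivialisations). -/
structure SmPrincipal (IM : ModelWithCorners ℝ EM HM) (M : Type u) [TopologicalSpace M]
    [ChartedSpace HM M] (IG : ModelWithCorners ℝ EG HG) (G : Type v) [TopologicalSpace G]
    [ChartedSpace HG G] [Group G] where
  E : Type w
  [tE : TopologicalSpace E]
  [cE : ChartedSpace (ModelProd HM HG) E]
  [smE : IsManifold (IM.prod IG) (⊤ : ℕ∞) E]
  proj : E → M
  act : E → G → E
  act_one : ∀ q, act q 1 = q
  act_mul : ∀ q g h, act (act q g) h = act q (g * h)
  proj_act : ∀ q g, proj (act q g) = proj q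
  proj_smooth : ContMDiff (IM.prod IG) IM (⊤ : ℕ∞) proj
  act_smooth : ContMDiff ((IM.prod IG).prod IG) (IM.prod IG) (⊤ : ℕ∞) (fun z : E × G => act z.1 z.2)
  gp : E → E → G
  gp_smooth : ContMDiffOn ((IM.prod IG).prod (IM.prod IG)) IG (⊤ : ℕ∞)
      (fun z : E × E => gp z.1 z.2) {z : E × E | proj z.1 = proj z.2}
  gp_act : ∀ q g, gp q (act q g) = g
  act_gp : ∀ q₁ q₂, proj q₁ = proj q₂ → act q₁ (gp q₁ q₂) = q₂
  loc_triv : ∀ x : M, ∃ U : Set M, IsOpen U ∧ x ∈ U ∧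
    ∃ s : M → E, ContMDiffOn IM (IM.prod IG) (⊤ : ℕ∞) s U ∧ ∀ y ∈ U, proj (s y) = y

attribute [instance] SmPrincipal.tE SmPrincipal.cE SmPrincipal.smE

variable {IM : ModelWithCorners ℝ EM HM} {M : Type u} [TopologicalSpace M] [ChartedSpace HM M]
  {IG : ModelWithCorners ℝ EG HG} {G : Type v} [TopologicalSpace G] [ChartedSpace HG G] [Group G]

/-- The functor `D_M` from smooth principal bundles to diffeological principal bundles:
it endows the total space with its manifold diffeology. -/
def SmPrincipal.toD (P : SmPrincipal IM M IG G) :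
    DPrincipal (manifoldD IM M) G (manifoldD IG G) where
  E := P.E
  DE := manifoldD (IM.prod IG) P.E
  proj := P.proj
  act := P.act
  act_one := P.act_one
  act_mul := P.act_mul
  proj_act := P.proj_act
  subd := by
    constructor
    · intro n c hc
      have hc' : ContMDiff 𝓘(ℝ, Eucl n) (IM.prod IG) (⊤ : ℕ∞) c := hc
      show ContMDiff 𝓘(ℝ, Eucl n) IM (⊤ : ℕ∞) (P.proj ∘ c)
      exact P.proj_smooth.comp hc'
    · intro n c hc x
      have hc' : ContMDiff 𝓘(ℝ, Eucl n) IM (⊤ : ℕ∞) c := hc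
      obtain ⟨U, hU, hxU, s, hs, hsec⟩ := P.loc_triv (c x)
      have hpre : IsOpen (c ⁻¹' U) := hU.preimage hc'.continuous
      obtain ⟨r, hr, hrU, V, hV, hxV, hid⟩ := exists_squash x hpre (by exact hxU)
      refine ⟨V, hV, hxV, s ∘ (c ∘ r), ?_, ?_⟩
      · show ContMDiff 𝓘(ℝ, Eucl n) (IM.prod IG) (⊤ : ℕ∞) (s ∘ (c ∘ r))
        apply hs.comp_contMDiff (hc'.comp hr.contMDiff)
        intro y
        exact hrU y
      · intro y hy
        have : c (r y) ∈ U := hrU y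
        show P.proj (s (c (r y))) = c y
        rw [hsec _ this, hid y hy]
  act_smooth := by
    intro n c hc
    have hc' : ContMDiff 𝓘(ℝ, Eucl n) ((IM.prod IG).prod IG) (⊤ : ℕ∞) c := by
      have h1 : ContMDiff 𝓘(ℝ, Eucl n) (IM.prod IG) (⊤ : ℕ∞) (Prod.fst ∘ c) := hc.1
      have h2 : ContMDiff 𝓘(ℝ, Eucl n) IG (⊤ : ℕ∞) (Prod.snd ∘ c) := hc.2
      exact h1.prodMk h2
    show ContMDiff 𝓘(ℝ, Eucl n) (IM.prod IG) (⊤ : ℕ∞) ((fun z : P.E × G => P.act z.1 z.2) ∘ c)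
    exact P.act_smooth.comp hc'
  gp := P.gp
  gp_smooth := by
    intro n c hc
    have hc1 : ContMDiff 𝓘(ℝ, Eucl n) (IM.prod IG) (⊤ : ℕ∞) (fun y => ((c y).val.1)) := hc.1
    have hc2 : ContMDiff 𝓘(ℝ, Eucl n) (IM.prod IG) (⊤ : ℕ∞) (fun y => ((c y).val.2)) := hc.2
    show ContMDiff 𝓘(ℝ, Eucl n) IG (⊤ : ℕ∞) ((fun z => P.gp z.val.1 z.val.2) ∘ c)
    have : ((fun z : {z : P.E × P.E // P.proj z.1 = P.proj z.2} => P.gp z.val.1 z.val.2) ∘ c)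
        = (fun z : P.E × P.E => P.gp z.1 z.2) ∘ (fun y => (c y).val) := rfl
    rw [this]
    apply P.gp_smooth.comp_contMDiff (hc1.prodMk hc2)
    intro y
    exact (c y).prop
  gp_act := P.gp_act
  act_gp := P.act_gp

end SmoothBundles
section Support

variable {X : Type*} {D : Diffeology X}

/-- Every plot is a smooth map from its Euclidean domain. -/
theorem dsmooth_of_plot {n : ℕ} {p : Eucl n → X} (hp : p ∈ D.plots n) :
    DSmooth (euclD (Eucl n)) D p := by
  intro m c hc
  have hc' : ContDiff ℝ ∞ c := hc
  exact D.reparam_mem hp hc'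

namespace DPath

@[simp] theorem comp_toFun_zero (γ₁ γ₂ : DPath D) (h : γ₁.toFun 1 = γ₂.toFun 0) :
    (γ₁.comp γ₂ h).toFun 0 = γ₁.toFun 0 := by
  show (if (0:ℝ) ≤ 1/2 then γ₁.toFun (2*0) else γ₂.toFun (2*0-1)) = γ₁.toFun 0
  rw [if_pos (by norm_num)]
  norm_num

@[simp] theorem comp_toFun_one (γ₁ γ₂ : DPath D) (h : γ₁.toFun 1 = γ₂.toFun 0) :
    (γ₁.comp γ₂ h).toFun 1 = γ₂.toFun 1 := by
  show (if (1:ℝ) ≤ 1/2 then γ₁.toFun (2*1) else γ₂.toFun (2*1-1)) = γ₂.toFun 1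
  rw [if_neg (by norm_num)]
  norm_num

@[simp] theorem reverse_toFun_zero (γ : DPath D) : γ.reverse.toFun 0 = γ.toFun 1 := by
  show γ.toFun (1 - 0) = γ.toFun 1
  norm_num

@[simp] theorem reverse_toFun_one (γ : DPath D) : γ.reverse.toFun 1 = γ.toFun 0 := by
  show γ.toFun (1 - 1) = γ.toFun 0
  norm_num

end DPath

@[simp] theorem glueLoop_toFun_zero (γ : DPath D) (h : γ.toFun 1 = γ.toFun 0) :
    (glueLoop γ h).toFun 0 = γ.toFun 0 := by
  show γ.toFun (Int.fract 0) = γ.toFun 0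
  rw [Int.fract_zero]

end Support
/-! ## STATEMENT 9
Diffeological principal `G`-bundles form a sheaf of groupoids over the site of diffeological
spaces with subductions as covers: subductions form a Grothendieck topology, and for every
subduction `ω : W → X` the pullback functor to the descent category is an equivalence
(fully faithful and essentially surjective). -/

section Statement9

variable {X : Type u} {W : Type v} {G : Type*} [Group G]
variable {D : Diffeology X} {DW : Diffeology W} {DG : Diffeology G}
variable {om : W → X}

/-- The two-fold fibre product of a map with itself. -/
def W2 (om : W → X) : Type _ := {z : W × W // om z.1 = om z.2}

/-- Its diffeology. -/
def dW2 (DW : Diffeology W) (om : W → X) : Diffeology (W2 om) :=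
  (DW.prod DW).induced Subtype.val

theorem pr1_smooth : DSmooth (dW2 DW om) DW (fun z : W2 om => z.val.1) := by
  intro n c hc
  have hc' : ((fun y => ((c y).val.1)) ∈ DW.plots n) ∧ ((fun y => ((c y).val.2)) ∈ DW.plots n) :=
    hc
  exact hc'.1

theorem pr2_smooth : DSmooth (dW2 DW om) DW (fun z : W2 om => z.val.2) := by
  intro n c hc
  have hc' : ((fun y => ((c y).val.1)) ∈ DW.plots n) ∧ ((fun y => ((c y).val.2)) ∈ DW.plots n) :=
    hc
  exact hc'.2

/-- Transfer of an element of the fibre over `w₁` to the fibre over `w₂` (with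
`ω w₁ = ω w₂`) using a descent morphism `d`. -/
def trf (P : DPrincipal DW G DG)
    (d : (P.pullback (fun z : W2 om => z.val.1) pr1_smooth).E →
      (P.pullback (fun z : W2 om => z.val.2) pr2_smooth).E)
    (w₁ w₂ : W) (h : om w₁ = om w₂) (q : P.E) (hq : P.proj q = w₁) : P.E :=
  (d ⟨(⟨(w₁, w₂), h⟩, q), hq.symm⟩).val.2

theorem proj_trf {P : DPrincipal DW G DG}
    {d : (P.pullback (fun z : W2 om => z.val.1) pr1_smooth).E →
      (P.pullback (fun z : W2 om => z.val.2) pr2_smooth).E}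
    (hd : IsBundleHom (P.pullback (fun z : W2 om => z.val.1) pr1_smooth)
      (P.pullback (fun z : W2 om => z.val.2) pr2_smooth) d)
    (w₁ w₂ : W) (h : om w₁ = om w₂) (q : P.E) (hq : P.proj q = w₁) :
    P.proj (trf P d w₁ w₂ h q hq) = w₂ := by
  have h2 := hd.2.1 ⟨(⟨(w₁, w₂), h⟩, q), hq.symm⟩
  have h3 : (d ⟨(⟨(w₁, w₂), h⟩, q), hq.symm⟩).val.1 = ⟨(w₁, w₂), h⟩ := h2
  have h1 : ((d ⟨(⟨(w₁, w₂), h⟩, q), hq.symm⟩).val.1).val.2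
      = P.proj (d ⟨(⟨(w₁, w₂), h⟩, q), hq.symm⟩).val.2 :=
    (d ⟨(⟨(w₁, w₂), h⟩, q), hq.symm⟩).prop
  show P.proj (d ⟨(⟨(w₁, w₂), h⟩, q), hq.symm⟩).val.2 = w₂
  rw [← h1, h3]

/-- A descent datum on a bundle over `W`, relative to `ω : W → X`: a bundle morphism between
the two pullbacks to `W ×_X W` satisfying the cocycle condition over `W ×_X W ×_X W`. -/
def IsDescentDatum (P : DPrincipal DW G DG)
    (d : (P.pullback (fun z : W2 om => z.val.1) pr1_smooth).E →
      (P.pullback (fun z : W2 om => z.val.2) pr2_smooth).E) : Prop :=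
  ∃ hd : IsBundleHom (P.pullback (fun z : W2 om => z.val.1) pr1_smooth)
      (P.pullback (fun z : W2 om => z.val.2) pr2_smooth) d,
    ∀ (w₁ w₂ w₃ : W) (h12 : om w₁ = om w₂) (h23 : om w₂ = om w₃) (q : P.E)
      (hq : P.proj q = w₁),
      trf P d w₂ w₃ h23 (trf P d w₁ w₂ h12 q hq) (proj_trf hd w₁ w₂ h12 q hq)
        = trf P d w₁ w₃ (h12.trans h23) q hq

/-! Full faithfulness: a morphism of pullbacks compatible with the canonical descent data is
constant along the fibres of `ω`, so it descends along any set-theoretic section of the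
surjection `ω`; it is smooth because plots of `X` lift locally to `W`.

Essential surjectivity: glue `P` by the relation `q ~ d q`. The cocycle condition makes this
an equivalence relation (and forces `d` to be the identity over the diagonal), and the quotient,
with the quotient diffeology, is a principal bundle over `X`. Its pullback is identified with
`P` by `(w, [q]) ↦ d`-transport of `q` to the fibre over `w`, which is well defined again by the
cocycle condition. -/

section Subductions

variable {Y Z : Type*} {DX : Diffeology X} {DY : Diffeology Y} {DZ : Diffeology Z}

theorem Diffeology.mem_plots_of_forall_comp {n : ℕ} {c : Eucl n → X}
    (h : ∀ x, ∃ U : Set (Eucl n), IsOpen U ∧ x ∈ U ∧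
      ∀ r : Eucl n → Eucl n, ContDiff ℝ ∞ r → (∀ y, r y ∈ U) → c ∘ r ∈ DX.plots n) :
    c ∈ DX.plots n := by
  refine DX.locality fun x => ?_
  obtain ⟨U, hU, hxU, hc⟩ := h x
  obtain ⟨r, hr, hrU, V, hV, hxV, hid⟩ := exists_squash x hU hxU
  exact ⟨V, hV, hxV, c ∘ r, hc r hr hrU, fun y hy => by rw [Function.comp_apply, hid y hy]⟩

theorem dsmooth_push (f : X → Y) : DSmooth DX (DX.push f) f :=
  fun _ p hp _ => ⟨Set.univ, isOpen_univ, trivial, Or.inr ⟨p, hp, fun _ _ => rfl⟩⟩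

theorem Diffeology.exists_local_lift_of_mem_push {f : X → Y} (hf : Function.Surjective f)
    {n : ℕ} {c : Eucl n → Y} (hc : c ∈ (DX.push f).plots n) (x : Eucl n) :
    ∃ U : Set (Eucl n), IsOpen U ∧ x ∈ U ∧ ∃ e ∈ DX.plots n, ∀ y ∈ U, c y = f (e y) := by
  obtain ⟨U, hU, hxU, hconst | hlift⟩ := hc x
  · obtain ⟨q, hq⟩ := hf (c x)
    exact ⟨U, hU, hxU, fun _ => q, DX.const_mem n q, fun y hy => by rw [hconst y hy, hq]⟩
  · exact ⟨U, hU, hxU, hlift⟩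

theorem DSmooth.of_comp_push {f : X → Y} {g : Y → Z} (hf : Function.Surjective f)
    (hgf : DSmooth DX DZ (g ∘ f)) : DSmooth (DX.push f) DZ g := by
  intro n c hc
  refine DZ.locality fun x => ?_
  obtain ⟨U, hU, hxU, e, he, hce⟩ := Diffeology.exists_local_lift_of_mem_push hf hc x
  exact ⟨U, hU, hxU, g ∘ f ∘ e, hgf n e he, fun y hy => by
    simp only [Function.comp_apply, hce y hy]⟩

theorem DSubduction.surjective {f : X → Y} (hf : DSubduction DX DY f) :
    Function.Surjective f := fun y => by
  obtain ⟨U, -, hU, q, -, hq⟩ := hf.2 0 (fun _ => y) (DY.const_mem 0 y) 0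
  exact ⟨q 0, hq 0 hU⟩

theorem dsubduction_id : DSubduction DX DX id :=
  ⟨dsmooth_id, fun _ p hp _ => ⟨Set.univ, isOpen_univ, trivial, p, hp, fun _ _ => rfl⟩⟩

theorem DSubduction.comp {f : X → Y} {g : Y → Z} (hg : DSubduction DY DZ g)
    (hf : DSubduction DX DY f) : DSubduction DX DZ (g ∘ f) := by
  refine ⟨hg.1.comp hf.1, fun n p hp x => ?_⟩
  obtain ⟨U, hU, hxU, q, hq, hgq⟩ := hg.2 n p hp x
  obtain ⟨V, hV, hxV, e, he, hfe⟩ := hf.2 n q hq x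
  exact ⟨U ∩ V, hU.inter hV, ⟨hxU, hxV⟩, e, he, fun y hy => by
    rw [Function.comp_apply, hfe y hy.2, hgq y hy.1]⟩

theorem DSubduction.of_comp {f : X → Y} {g : Y → Z} (hgf : DSubduction DX DZ (g ∘ f))
    (hf : DSmooth DX DY f) (hg : DSmooth DY DZ g) : DSubduction DY DZ g := by
  refine ⟨hg, fun n p hp x => ?_⟩
  obtain ⟨U, hU, hxU, q, hq, hgfq⟩ := hgf.2 n p hp x
  exact ⟨U, hU, hxU, f ∘ q, hf n q hq, hgfq⟩

theorem DSubduction.fst_of_pullback {f : Y → Z} {g : X → Z} (hg : DSubduction DX DZ g)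
    (hf : DSmooth DY DZ f) :
    DSubduction ((DY.prod DX).induced (Subtype.val : {z : Y × X // f z.1 = g z.2} → Y × X)) DY
      (fun z => z.val.1) := by
  refine ⟨fun _ _ hp => hp.1, fun n p hp x => ?_⟩
  obtain ⟨U, hU, hxU, q, hq, hgq⟩ := hg.2 n (f ∘ p) (hf n p hp) x
  obtain ⟨r, hr, hrU, V, hV, hxV, hid⟩ := exists_squash x hU hxU
  refine ⟨V, hV, hxV, fun y => ⟨(p (r y), q (r y)), (hgq _ (hrU y)).symm⟩,
    ⟨DY.reparam_mem hp hr, DX.reparam_mem hq hr⟩, fun y hy => ?_⟩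
  show p (r y) = p y
  rw [hid y hy]

end Subductions

namespace DPrincipal

variable {P : DPrincipal D G DG}

theorem eq_one_of_act_eq_self {q : P.E} {g : G} (h : P.act q g = q) : g = 1 := by
  have h₁ : P.gp q q = g := (congrArg (P.gp q) h).symm.trans (P.gp_act q g)
  have h₂ : P.gp q q = 1 := by simpa only [P.act_one] using P.gp_act q 1
  exact h₁.symm.trans h₂

end DPrincipal

section Descent

variable (P : DPrincipal DW G DG)
  (d : (P.pullback (fun z : W2 om => z.val.1) pr1_smooth).E →
    (P.pullback (fun z : W2 om => z.val.2) pr2_smooth).E)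

open Classical in
/-- `trf` without the dependent bookkeeping; it is the identity off the fibre product. -/
def descentTransport (q : P.E) (w : W) : P.E :=
  if h : om (P.proj q) = om w then trf P d (P.proj q) w h q rfl else q

def descentRel (q q' : P.E) : Prop :=
  om (P.proj q) = om (P.proj q') ∧ descentTransport P d q (P.proj q') = q'

open Classical in
def descentDiv (a b : P.E) : G :=
  if om (P.proj a) = om (P.proj b) then P.gp (descentTransport P d a (P.proj b)) b else 1

variable {P d}

theorem trf_eq_descentTransport {w₁ w₂ : W} (h : om w₁ = om w₂) {q : P.E}
    (hq : P.proj q = w₁) : trf P d w₁ w₂ h q hq = descentTransport P d q w₂ := by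
  subst hq
  rw [descentTransport, dif_pos h]

theorem descentTransport_of_not {q : P.E} {w : W} (h : om (P.proj q) ≠ om w) :
    descentTransport P d q w = q :=
  dif_neg h

theorem proj_descentTransport
    (hd : IsBundleHom (P.pullback (fun z : W2 om => z.val.1) pr1_smooth)
      (P.pullback (fun z : W2 om => z.val.2) pr2_smooth) d)
    {q : P.E} {w : W} (h : om (P.proj q) = om w) : P.proj (descentTransport P d q w) = w := by
  rw [← trf_eq_descentTransport h rfl]
  exact proj_trf hd _ _ h q rfl

theorem descentTransport_act
    (hd : IsBundleHom (P.pullback (fun z : W2 om => z.val.1) pr1_smooth)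
      (P.pullback (fun z : W2 om => z.val.2) pr2_smooth) d)
    (q : P.E) (g : G) (w : W) :
    descentTransport P d (P.act q g) w = P.act (descentTransport P d q w) g := by
  by_cases h : om (P.proj q) = om w
  · rw [← trf_eq_descentTransport h (P.proj_act q g), ← trf_eq_descentTransport h rfl]
    exact congrArg (fun z => z.val.2) (hd.2.2 ⟨(⟨(P.proj q, w), h⟩, q), rfl⟩ g)
  · have h' : om (P.proj (P.act q g)) ≠ om w := by rwa [P.proj_act]
    rw [descentTransport_of_not h', descentTransport_of_not h]

theorem descentTransport_mem_plots
    (hd : IsBundleHom (P.pullback (fun z : W2 om => z.val.1) pr1_smooth)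
      (P.pullback (fun z : W2 om => z.val.2) pr2_smooth) d)
    {n : ℕ} {e : Eucl n → P.E} {c : Eucl n → W} (he : e ∈ P.DE.plots n)
    (hc : c ∈ DW.plots n) (h : ∀ y, om (P.proj (e y)) = om (c y)) :
    (fun y => descentTransport P d (e y) (c y)) ∈ P.DE.plots n := by
  have hplot : (fun y => (⟨(⟨(P.proj (e y), c y), h y⟩, e y), rfl⟩ :
      (P.pullback (fun z : W2 om => z.val.1) pr1_smooth).E)) ∈
      (P.pullback (fun z : W2 om => z.val.1) pr1_smooth).DE.plots n :=
    ⟨⟨P.subd.1 n e he, hc⟩, he⟩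
  have htrf : (fun y => descentTransport P d (e y) (c y)) =
      fun y => (d ⟨(⟨(P.proj (e y), c y), h y⟩, e y), rfl⟩).val.2 :=
    funext fun y => (trf_eq_descentTransport (h y) rfl).symm
  rw [htrf]
  exact (hd.1 n _ hplot).2

theorem descentTransport_descentTransport (hdd : IsDescentDatum P d) {w w' : W}
    (h : om w = om w') (q : P.E) :
    descentTransport P d (descentTransport P d q w) w' = descentTransport P d q w' := by
  by_cases hq : om (P.proj q) = om w
  · obtain ⟨hd, hcocycle⟩ := hdd
    rw [← trf_eq_descentTransport hq rfl, ← trf_eq_descentTransport (hq.trans h) rfl,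
      ← trf_eq_descentTransport h (proj_trf hd _ _ hq q rfl)]
    exact hcocycle _ _ _ hq h q rfl
  · rw [descentTransport_of_not hq]

theorem descentTransport_self (hdd : IsDescentDatum P d) (q : P.E) :
    descentTransport P d q (P.proj q) = q := by
  have hproj : P.proj (descentTransport P d q (P.proj q)) = P.proj q :=
    proj_descentTransport hdd.1 rfl
  obtain ⟨g, hg⟩ : ∃ g, P.act q g = descentTransport P d q (P.proj q) :=
    ⟨_, P.act_gp q _ hproj.symm⟩
  -- On the diagonal `d` is an equivariant idempotent of a free fibre, hence the identity.
  have hfix : P.act (descentTransport P d q (P.proj q)) g =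
      descentTransport P d q (P.proj q) := by
    rw [← descentTransport_act hdd.1, hg, descentTransport_descentTransport hdd rfl]
  rw [← hg, DPrincipal.eq_one_of_act_eq_self hfix, P.act_one]

theorem descentRel_equivalence (hdd : IsDescentDatum P d) : Equivalence (descentRel P d) where
  refl q := ⟨rfl, descentTransport_self hdd q⟩
  symm {a b} := fun ⟨h, hab⟩ => ⟨h.symm, by
    calc descentTransport P d b (P.proj a)
        = descentTransport P d (descentTransport P d a (P.proj b)) (P.proj a) := by rw [hab]
      _ = descentTransport P d a (P.proj a) := descentTransport_descentTransport hdd h.symm a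
      _ = a := descentTransport_self hdd a⟩
  trans {a b c} := fun ⟨hab, eab⟩ ⟨hbc, ebc⟩ => ⟨hab.trans hbc, by
    calc descentTransport P d a (P.proj c)
        = descentTransport P d (descentTransport P d a (P.proj b)) (P.proj c) :=
          (descentTransport_descentTransport hdd hbc a).symm
      _ = descentTransport P d b (P.proj c) := by rw [eab]
      _ = c := ebc⟩

theorem descentRel_descentTransport
    (hd : IsBundleHom (P.pullback (fun z : W2 om => z.val.1) pr1_smooth)
      (P.pullback (fun z : W2 om => z.val.2) pr2_smooth) d)
    {q : P.E} {w : W} (h : om (P.proj q) = om w) :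
    descentRel P d q (descentTransport P d q w) := by
  have hp := proj_descentTransport hd h
  exact ⟨by rw [hp]; exact h, by rw [hp]⟩

theorem descentRel_act
    (hd : IsBundleHom (P.pullback (fun z : W2 om => z.val.1) pr1_smooth)
      (P.pullback (fun z : W2 om => z.val.2) pr2_smooth) d)
    {q q' : P.E} (hqq : descentRel P d q q') (g : G) :
    descentRel P d (P.act q g) (P.act q' g) := by
  obtain ⟨h, e⟩ := hqq
  refine ⟨by simpa only [P.proj_act] using h, ?_⟩
  rw [P.proj_act, descentTransport_act hd, e]

theorem descentDiv_of_eq {a b : P.E} (h : om (P.proj a) = om (P.proj b)) :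
    descentDiv P d a b = P.gp (descentTransport P d a (P.proj b)) b :=
  if_pos h

theorem descentDiv_congr_left (hdd : IsDescentDatum P d) {a a' : P.E}
    (haa : descentRel P d a a') (b : P.E) : descentDiv P d a b = descentDiv P d a' b := by
  obtain ⟨h, e⟩ := haa
  by_cases hb : om (P.proj a) = om (P.proj b)
  · rw [descentDiv_of_eq hb, descentDiv_of_eq (h.symm.trans hb), ← e,
      descentTransport_descentTransport hdd (h.symm.trans hb)]
  · simp only [descentDiv, if_neg hb, if_neg fun h' => hb (h.trans h')]

theorem descentDiv_congr_right (hdd : IsDescentDatum P d) (a : P.E) {b b' : P.E}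
    (hbb : descentRel P d b b') : descentDiv P d a b = descentDiv P d a b' := by
  obtain ⟨h, e⟩ := hbb
  by_cases hb : om (P.proj a) = om (P.proj b)
  · rw [descentDiv_of_eq hb, descentDiv_of_eq (hb.trans h)]
    have hb_eq : P.act (descentTransport P d a (P.proj b))
        (P.gp (descentTransport P d a (P.proj b)) b) = b :=
      P.act_gp _ _ (proj_descentTransport hdd.1 hb)
    have hb'_eq : P.act (descentTransport P d a (P.proj b'))
        (P.gp (descentTransport P d a (P.proj b)) b) = b' := by
      rw [← descentTransport_descentTransport hdd h a, ← descentTransport_act hdd.1, hb_eq, e]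
    exact (P.gp_act _ _).symm.trans (congrArg (P.gp _) hb'_eq)
  · have hb' : om (P.proj a) ≠ om (P.proj b') := fun h' => hb (h'.trans h.symm)
    simp only [descentDiv, if_neg hb, if_neg hb']

end Descent

section DescendedBundle

variable (P : DPrincipal DW G DG)
  (d : (P.pullback (fun z : W2 om => z.val.1) pr1_smooth).E →
    (P.pullback (fun z : W2 om => z.val.2) pr2_smooth).E)

def descentProj : Quot (descentRel P d) → X :=
  Quot.lift (fun q => om (P.proj q)) fun _ _ h => h.1

variable {P d}

def descentAct
    (hd : IsBundleHom (P.pullback (fun z : W2 om => z.val.1) pr1_smooth)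
      (P.pullback (fun z : W2 om => z.val.2) pr2_smooth) d)
    (z : Quot (descentRel P d)) (g : G) : Quot (descentRel P d) :=
  Quot.map (fun q => P.act q g) (fun _ _ h => descentRel_act hd h g) z

def descentQuotDiv (hdd : IsDescentDatum P d) :
    Quot (descentRel P d) → Quot (descentRel P d) → G :=
  Quot.lift₂ (descentDiv P d) (fun a _ _ h => descentDiv_congr_right hdd a h)
    (fun _ _ b h => descentDiv_congr_left hdd h b)

theorem dsmooth_descentProj (hom : DSmooth DW D om) :
    DSmooth (P.DE.push (Quot.mk (descentRel P d))) D (descentProj P d) :=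
  DSmooth.of_comp_push Quot.mk_surjective (hom.comp P.subd.1)

theorem dsmooth_descentAct
    (hd : IsBundleHom (P.pullback (fun z : W2 om => z.val.1) pr1_smooth)
      (P.pullback (fun z : W2 om => z.val.2) pr2_smooth) d) :
    DSmooth ((P.DE.push (Quot.mk (descentRel P d))).prod DG) (P.DE.push (Quot.mk _))
      (fun z => descentAct hd z.1 z.2) := by
  rintro n c ⟨hc₁, hc₂⟩ x
  obtain ⟨U, hU, hxU, e, he, hce⟩ :=
    Diffeology.exists_local_lift_of_mem_push Quot.mk_surjective hc₁ x
  refine ⟨U, hU, hxU, Or.inr ⟨fun y => P.act (e y) (c y).2,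
    P.act_smooth n (fun y => (e y, (c y).2)) ⟨he, hc₂⟩, fun y hy => ?_⟩⟩
  have hce' : (c y).1 = Quot.mk _ (e y) := hce y hy
  show descentAct hd (c y).1 (c y).2 = _
  rw [hce']
  rfl

theorem dsmooth_descentQuotDiv (hdd : IsDescentDatum P d) :
    DSmooth (((P.DE.push (Quot.mk (descentRel P d))).prod (P.DE.push (Quot.mk _))).induced
      (Subtype.val : {z // descentProj P d z.1 = descentProj P d z.2} → _)) DG
      (fun z => descentQuotDiv hdd z.val.1 z.val.2) := by
  rintro n c ⟨hc₁, hc₂⟩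
  refine DG.mem_plots_of_forall_comp fun x => ?_
  obtain ⟨U₁, hU₁, hxU₁, e₁, he₁, hce₁⟩ :=
    Diffeology.exists_local_lift_of_mem_push Quot.mk_surjective hc₁ x
  obtain ⟨U₂, hU₂, hxU₂, e₂, he₂, hce₂⟩ :=
    Diffeology.exists_local_lift_of_mem_push Quot.mk_surjective hc₂ x
  refine ⟨U₁ ∩ U₂, hU₁.inter hU₂, ⟨hxU₁, hxU₂⟩, fun r hr hrU => ?_⟩
  have hce : ∀ y, (c (r y)).val = (Quot.mk _ (e₁ (r y)), Quot.mk _ (e₂ (r y))) := fun y =>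
    Prod.ext (hce₁ _ (hrU y).1) (hce₂ _ (hrU y).2)
  have hfib : ∀ y, om (P.proj (e₁ (r y))) = om (P.proj (e₂ (r y))) := fun y => by
    have h := (c (r y)).prop
    rwa [hce y] at h
  have hτ := descentTransport_mem_plots hdd.1 (P.DE.reparam_mem he₁ hr)
    (P.subd.1 n _ (P.DE.reparam_mem he₂ hr)) hfib
  convert P.gp_smooth n (fun y => ⟨(_, e₂ (r y)), proj_descentTransport hdd.1 (hfib y)⟩)
    ⟨hτ, P.DE.reparam_mem he₂ hr⟩ using 1
  funext y
  show descentQuotDiv hdd (c (r y)).val.1 (c (r y)).val.2 = _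
  rw [hce y]
  exact descentDiv_of_eq (hfib y)

def descendedBundle (hom : DSubduction DW D om) (hdd : IsDescentDatum P d) :
    DPrincipal D G DG where
  E := Quot (descentRel P d)
  DE := P.DE.push (Quot.mk _)
  proj := descentProj P d
  act := descentAct hdd.1
  act_one z := by
    induction z using Quot.ind
    exact congrArg (Quot.mk _) (P.act_one _)
  act_mul z g h := by
    induction z using Quot.ind
    exact congrArg (Quot.mk _) (P.act_mul _ g h)
  proj_act z g := by
    induction z using Quot.ind
    exact congrArg om (P.proj_act _ g)
  subd := DSubduction.of_comp (hom.comp P.subd) (dsmooth_push _) (dsmooth_descentProj hom.1)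
  act_smooth := dsmooth_descentAct hdd.1
  gp := descentQuotDiv hdd
  gp_smooth := dsmooth_descentQuotDiv hdd
  gp_act z g := by
    induction z using Quot.ind with | mk q => ?_
    show descentDiv P d q (P.act q g) = g
    rw [descentDiv_of_eq (congrArg om (P.proj_act q g)).symm, P.proj_act,
      descentTransport_self hdd, P.gp_act]
  act_gp z₁ z₂ := by
    induction z₁ using Quot.ind with | mk a => ?_
    induction z₂ using Quot.ind with | mk b => ?_
    intro h
    change om (P.proj a) = om (P.proj b) at h
    show Quot.mk _ (P.act a (descentDiv P d a b)) = Quot.mk _ b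
    refine Quot.sound ⟨by rwa [P.proj_act], ?_⟩
    rw [descentDiv_of_eq h, descentTransport_act hdd.1]
    exact P.act_gp _ _ (proj_descentTransport hdd.1 h)

variable (hom : DSubduction DW D om) (hdd : IsDescentDatum P d)

def descentComparison : ((descendedBundle hom hdd).pullback om hom.1).E → P.E :=
  fun z => descentTransport P d (Quot.out z.val.2) z.val.1

def descentComparisonInv : P.E → ((descendedBundle hom hdd).pullback om hom.1).E :=
  fun q => ⟨(P.proj q, Quot.mk _ q), rfl⟩

theorem descentComparison_eq {z : ((descendedBundle hom hdd).pullback om hom.1).E} {q : P.E}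
    (hz : z.val.2 = Quot.mk _ q) :
    descentComparison hom hdd z = descentTransport P d q z.val.1 := by
  obtain ⟨⟨w, z₂⟩, pf⟩ := z
  subst hz
  obtain ⟨-, hout⟩ := (descentRel_equivalence hdd).eqvGen_iff.1
    (Quot.eqvGen_exact (Quot.out_eq (Quot.mk (descentRel P d) q)))
  calc descentTransport P d (Quot.out (Quot.mk _ q)) w
      = descentTransport P d
          (descentTransport P d (Quot.out (Quot.mk _ q)) (P.proj q)) w :=
        (descentTransport_descentTransport hdd pf.symm _).symm
    _ = descentTransport P d q w := by rw [hout]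

theorem descentComparison_mk {w : W} {q : P.E} (pf : om w = descentProj P d (Quot.mk _ q)) :
    descentComparison hom hdd ⟨(w, Quot.mk _ q), pf⟩ = descentTransport P d q w :=
  descentComparison_eq hom hdd rfl

theorem descentComparison_inv (q : P.E) :
    descentComparison hom hdd (descentComparisonInv hom hdd q) = q :=
  (descentComparison_eq hom hdd rfl).trans (descentTransport_self hdd q)

theorem descentComparisonInv_comparison (z : ((descendedBundle hom hdd).pullback om hom.1).E) :
    descentComparisonInv hom hdd (descentComparison hom hdd z) = z := by
  obtain ⟨⟨w, z₂⟩, pf⟩ := z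
  obtain ⟨q, rfl⟩ := Quot.exists_rep z₂
  have h : om (P.proj q) = om w := pf.symm
  refine Subtype.ext ?_
  show (P.proj (descentComparison hom hdd _), Quot.mk _ (descentComparison hom hdd _)) = _
  rw [descentComparison_mk hom hdd pf]
  exact Prod.ext (proj_descentTransport hdd.1 h)
    (Quot.sound (descentRel_descentTransport hdd.1 h)).symm

theorem isBundleHom_descentComparison :
    IsBundleHom ((descendedBundle hom hdd).pullback om hom.1) P (descentComparison hom hdd) := by
  refine ⟨?_, ?_, ?_⟩
  · rintro n c ⟨hc₁, hc₂⟩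
    refine P.DE.mem_plots_of_forall_comp fun x => ?_
    obtain ⟨U, hU, hxU, e, he, hce⟩ :=
      Diffeology.exists_local_lift_of_mem_push Quot.mk_surjective hc₂ x
    refine ⟨U, hU, hxU, fun r hr hrU => ?_⟩
    have hce' : ∀ y, (c (r y)).val.2 = Quot.mk _ (e (r y)) := fun y => hce _ (hrU y)
    have hfib : ∀ y, om (P.proj (e (r y))) = om (c (r y)).val.1 := fun y => by
      have h := (c (r y)).prop
      rw [hce' y] at h
      exact h.symm
    convert descentTransport_mem_plots hdd.1 (P.DE.reparam_mem he hr)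
      (DW.reparam_mem hc₁ hr) hfib using 1
    exact funext fun y => descentComparison_eq hom hdd (hce' y)
  · rintro ⟨⟨w, z₂⟩, pf⟩
    obtain ⟨q, rfl⟩ := Quot.exists_rep z₂
    rw [descentComparison_mk hom hdd pf]
    exact proj_descentTransport hdd.1 pf.symm
  · rintro ⟨⟨w, z₂⟩, pf⟩ g
    obtain ⟨q, rfl⟩ := Quot.exists_rep z₂
    calc _ = descentTransport P d (P.act q g) w := descentComparison_eq hom hdd rfl
      _ = _ := by rw [descentComparison_mk hom hdd pf]; exact descentTransport_act hdd.1 q g w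

theorem isBundleHom_descentComparisonInv :
    IsBundleHom P ((descendedBundle hom hdd).pullback om hom.1)
      (descentComparisonInv hom hdd) :=
  ⟨fun n c hc => ⟨P.subd.1 n c hc, dsmooth_push _ n c hc⟩, fun _ => rfl,
    fun q g => Subtype.ext (Prod.ext (P.proj_act q g) rfl)⟩

theorem descentTransport_descentComparison {w₁ w₂ : W} (h : om w₁ = om w₂)
    (z : Quot (descentRel P d)) (pf₁ : om w₁ = descentProj P d z)
    (pf₂ : om w₂ = descentProj P d z) :
    descentTransport P d (descentComparison hom hdd ⟨(w₁, z), pf₁⟩) w₂ =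
      descentComparison hom hdd ⟨(w₂, z), pf₂⟩ := by
  obtain ⟨q, rfl⟩ := Quot.exists_rep z
  rw [descentComparison_mk hom hdd pf₁, descentComparison_mk hom hdd pf₂]
  exact descentTransport_descentTransport hdd h _

end DescendedBundle

section FullyFaithful

variable {P₀ Q₀ : DPrincipal D G DG} (hom : DSubduction DW D om)
  {ψ : (P₀.pullback om hom.1).E → (Q₀.pullback om hom.1).E}

def descendedHom (ψ : (P₀.pullback om hom.1).E → (Q₀.pullback om hom.1).E) (q : P₀.E) : Q₀.E :=
  (ψ ⟨(Function.surjInv hom.surjective (P₀.proj q), q), Function.surjInv_eq _ _⟩).val.2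

theorem descendedHom_spec
    (hindep : ∀ (w₁ w₂ : W) (_ : om w₁ = om w₂) (q : P₀.E) (pf₁ : om w₁ = P₀.proj q)
      (pf₂ : om w₂ = P₀.proj q), (ψ ⟨(w₁, q), pf₁⟩).val.2 = (ψ ⟨(w₂, q), pf₂⟩).val.2)
    (w : W) (q : P₀.E) (pf : om w = P₀.proj q) :
    (ψ ⟨(w, q), pf⟩).val.2 = descendedHom hom ψ q :=
  hindep _ _ (pf.trans (Function.surjInv_eq _ _).symm) q pf _

theorem isBundleHom_descendedHom
    (hψ : IsBundleHom (P₀.pullback om hom.1) (Q₀.pullback om hom.1) ψ)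
    (hindep : ∀ (w₁ w₂ : W) (_ : om w₁ = om w₂) (q : P₀.E) (pf₁ : om w₁ = P₀.proj q)
      (pf₂ : om w₂ = P₀.proj q), (ψ ⟨(w₁, q), pf₁⟩).val.2 = (ψ ⟨(w₂, q), pf₂⟩).val.2) :
    IsBundleHom P₀ Q₀ (descendedHom hom ψ) := by
  refine ⟨fun n p hp => Q₀.DE.mem_plots_of_forall_comp fun x => ?_, fun q => ?_, fun q g => ?_⟩
  · obtain ⟨U, hU, hxU, c, hc, hlift⟩ := hom.2 n (P₀.proj ∘ p) (P₀.subd.1 n p hp) x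
    refine ⟨U, hU, hxU, fun r hr hrU => ?_⟩
    have hplot : (fun y => (⟨(c (r y), p (r y)), hlift _ (hrU y)⟩ : (P₀.pullback om hom.1).E))
        ∈ (P₀.pullback om hom.1).DE.plots n :=
      ⟨DW.reparam_mem hc hr, P₀.DE.reparam_mem hp hr⟩
    convert (hψ.1 n _ hplot).2 using 1
    exact funext fun y => (descendedHom_spec hom hindep _ _ _).symm
  · set z : (P₀.pullback om hom.1).E :=
      ⟨(Function.surjInv hom.surjective (P₀.proj q), q), Function.surjInv_eq _ _⟩
    have hfib : om (ψ z).val.1 = Q₀.proj (ψ z).val.2 := (ψ z).prop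
    rw [show (ψ z).val.1 = z.val.1 from hψ.2.1 z] at hfib
    exact hfib.symm.trans (Function.surjInv_eq _ _)
  · set w := Function.surjInv hom.surjective (P₀.proj q)
    calc descendedHom hom ψ (P₀.act q g)
        = (ψ ⟨(w, P₀.act q g), (Function.surjInv_eq _ _).trans (P₀.proj_act q g).symm⟩).val.2 :=
          (descendedHom_spec hom hindep _ _ _).symm
      _ = Q₀.act (descendedHom hom ψ q) g :=
          congrArg (fun z => z.val.2) (hψ.2.2 ⟨(w, q), Function.surjInv_eq _ _⟩ g)

theorem existsUnique_bundleHom_of_pullback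
    (hψ : IsBundleHom (P₀.pullback om hom.1) (Q₀.pullback om hom.1) ψ)
    (hindep : ∀ (w₁ w₂ : W) (_ : om w₁ = om w₂) (q : P₀.E) (pf₁ : om w₁ = P₀.proj q)
      (pf₂ : om w₂ = P₀.proj q), (ψ ⟨(w₁, q), pf₁⟩).val.2 = (ψ ⟨(w₂, q), pf₂⟩).val.2) :
    ∃! φ : P₀.E → Q₀.E, ∃ hφ : IsBundleHom P₀ Q₀ φ,
      ∀ (w : W) (q : P₀.E) (pf : om w = P₀.proj q),
        ψ ⟨(w, q), pf⟩ = ⟨(w, φ q), by rw [hφ.2.1 q]; exact pf⟩ := by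
  refine ⟨descendedHom hom ψ, ⟨isBundleHom_descendedHom hom hψ hindep, fun w q pf =>
    Subtype.ext (Prod.ext (hψ.2.1 _) (descendedHom_spec hom hindep w q pf))⟩, ?_⟩
  rintro φ ⟨_, hφ⟩
  funext q
  exact (congrArg (fun z => z.val.2) (hφ _ q (Function.surjInv_eq hom.surjective _))).symm

end FullyFaithful

theorem descent_equivalence_and_site
    {X : Type u} {W : Type u} {G : Type u} [Group G]
    (D : Diffeology X) (DW : Diffeology W) (DG : Diffeology G)
    (om : W → X) (hom : DSubduction DW D om) :
    -- subductions form a Grothendieck topology: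
    (∀ (Z : Type u) (DZ : Diffeology Z), DSubduction DZ DZ id) ∧
    (∀ (Z Z' Z'' : Type u) (DZ : Diffeology Z) (DZ' : Diffeology Z') (DZ'' : Diffeology Z'')
      (f : Z → Z') (g : Z' → Z''), DSubduction DZ DZ' f → DSubduction DZ' DZ'' g →
      DSubduction DZ DZ'' (g ∘ f)) ∧
    (∀ (Z : Type u) (DZ : Diffeology Z) (f : Z → X), DSmooth DZ D f →
      DSubduction (((DZ.prod DW).induced
          (Subtype.val : {z : Z × W // f z.1 = om z.2} → Z × W))) DZ
        (fun z => z.val.1)) ∧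
    -- the pullback functor to the descent category is fully faithful:
    (∀ (P₀ Q₀ : DPrincipal.{u, u, u} D G DG)
      (ψ : (P₀.pullback om hom.1).E → (Q₀.pullback om hom.1).E),
      IsBundleHom (P₀.pullback om hom.1) (Q₀.pullback om hom.1) ψ →
      (∀ (w₁ w₂ : W) (_ : om w₁ = om w₂) (q : P₀.E) (pf₁ : om w₁ = P₀.proj q)
        (pf₂ : om w₂ = P₀.proj q),
        (ψ ⟨(w₁, q), pf₁⟩).val.2 = (ψ ⟨(w₂, q), pf₂⟩).val.2) →
      ∃! φ : P₀.E → Q₀.E, ∃ hφ : IsBundleHom P₀ Q₀ φ,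
        ∀ (w : W) (q : P₀.E) (pf : om w = P₀.proj q),
          ψ ⟨(w, q), pf⟩ = ⟨(w, φ q), by rw [hφ.2.1 q]; exact pf⟩) ∧
    -- and essentially surjective:
    (∀ (P : DPrincipal.{u, u, u} DW G DG)
      (d : (P.pullback (fun z : W2 om => z.val.1) pr1_smooth).E →
        (P.pullback (fun z : W2 om => z.val.2) pr2_smooth).E),
      IsDescentDatum P d →
      ∃ (P₀ : DPrincipal.{u, u, u} D G DG)
        (φ : (P₀.pullback om hom.1).E → P.E),
        ∃ hφ : IsBundleHom (P₀.pullback om hom.1) P φ,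
          Function.Bijective φ ∧
          (∃ ψ : P.E → (P₀.pullback om hom.1).E,
            IsBundleHom P (P₀.pullback om hom.1) ψ ∧
            (∀ z, ψ (φ z) = z) ∧ ∀ z, φ (ψ z) = z) ∧
          -- φ identifies the canonical descent structure with d:
          ∀ (w₁ w₂ : W) (h : om w₁ = om w₂) (q₀ : P₀.E) (pf : om w₁ = P₀.proj q₀),
            trf P d w₁ w₂ h (φ ⟨(w₁, q₀), pf⟩) (hφ.2.1 ⟨(w₁, q₀), pf⟩)
              = φ ⟨(w₂, q₀), h ▸ pf⟩) := by
  refine ⟨fun _ _ => dsubduction_id, fun _ _ _ _ _ _ _ _ hf hg => hg.comp hf,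
    fun _ _ _ hf => hom.fst_of_pullback hf,
    fun _ _ _ hψ hindep => existsUnique_bundleHom_of_pullback hom hψ hindep, fun P d hdd => ?_⟩
  refine ⟨descendedBundle hom hdd, descentComparison hom hdd,
    isBundleHom_descentComparison hom hdd,
    Function.bijective_iff_has_inverse.2 ⟨_, descentComparisonInv_comparison hom hdd,
      descentComparison_inv hom hdd⟩,
    ⟨descentComparisonInv hom hdd, isBundleHom_descentComparisonInv hom hdd,
      descentComparisonInv_comparison hom hdd, descentComparison_inv hom hdd⟩,
    fun w₁ w₂ h z pf => ?_⟩
  exact (trf_eq_descentTransport h _).trans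
    (descentTransport_descentComparison hom hdd h z pf _)

end Statement9
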